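/- arXiv:2311.09631 — 4 statements merged into one kernel-verified Lean document; each statement's English description precedes it below -/
import Mathlib

section
/- Let ℓ ≥ 2, let C be a depth-d QAC circuit on n+a qubits in which every CZ gate acts on a subset of size at most ℓ, and let ψ be an a-qubit density matrix. Then W^{>ℓ^d + 1}[Φ_{C,ψ}] = 0; that is, every Pauli coefficient of the Choi representation Φ_{C,ψ} at an (n+1)-qubit Pauli of degree greater than ℓ^d + 1 vanishes. -/
open scoped BigOperators ComplexOrder

noncomputable section

/-- The four 1-qubit Pauli matrices, indexed by `Fin 4` (`0 = I`, `1 = X`, `2 = Y`, `3 = Z`). -/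
def pauliMat (q : Fin 4) : Matrix Bool Bool ℂ := fun b b' =>
  if q = 0 then (if b = b' then 1 else 0)
  else if q = 1 then (if b = b' then 0 else 1)
  else if q = 2 then
    (if b then (if b' then 0 else Complex.I) else (if b' then -Complex.I else 0))
  else (if b = b' then (if b then -1 else 1) else 0)

/-- An `m`-qubit Pauli tensor `P = P_1 ⊗ … ⊗ P_m`. -/
def pauliTensor {m : ℕ} (p : Fin m → Fin 4) :
    Matrix (Fin m → Bool) (Fin m → Bool) ℂ :=
  Matrix.of fun x y => ∏ i, pauliMat (p i) (x i) (y i)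

/-- The degree `|P|` of a Pauli: the number of non-identity tensor factors. -/
def pauliDeg {m : ℕ} (p : Fin m → Fin 4) : ℕ :=
  (Finset.univ.filter fun i => p i ≠ 0).card

/-- The Pauli coefficient `Â(P) = 2^{-m} · tr(P·A)`. -/
def pauliCoeff {m : ℕ} (A : Matrix (Fin m → Bool) (Fin m → Bool) ℂ)
    (p : Fin m → Fin 4) : ℂ :=
  ((2 : ℂ) ^ m)⁻¹ * (pauliTensor p * A).trace

/-- The Pauli weight of `A` above degree `k`: `W^{>k}[A] = Σ_{|P|>k} |Â(P)|²`. -/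
def weightAbove {m : ℕ} (k : ℕ) (A : Matrix (Fin m → Bool) (Fin m → Bool) ℂ) : ℝ :=
  ∑ p : Fin m → Fin 4,
    if k < pauliDeg p then ‖pauliCoeff A p‖ ^ 2 else 0

/-- The Pauli weight of `A` at degree exactly `k`. -/
def weightEq {m : ℕ} (k : ℕ) (A : Matrix (Fin m → Bool) (Fin m → Bool) ℂ) : ℝ :=
  ∑ p : Fin m → Fin 4,
    if pauliDeg p = k then ‖pauliCoeff A p‖ ^ 2 else 0

/-- The squared Frobenius norm `‖A‖_F² = tr(A†A) = Σ |A x y|²`. -/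
def frobSq {α : Type*} [Fintype α] (A : Matrix α α ℂ) : ℝ :=
  ∑ x, ∑ y, ‖A x y‖ ^ 2

/-- A matrix is unitary. -/
def IsUnitaryM {α : Type*} [Fintype α] [DecidableEq α] (U : Matrix α α ℂ) : Prop :=
  U * U.conjTranspose = 1 ∧ U.conjTranspose * U = 1

/-- Trace out all qubits except the last one of an `m`-qubit matrix. -/
def chanLast : {m : ℕ} → Matrix (Fin m → Bool) (Fin m → Bool) ℂ → Matrix Bool Bool ℂ
  | 0, _ => 0
  | _ + 1, M => Matrix.of fun b b' =>
      ∑ z, M (Fin.snoc z b) (Fin.snoc z b')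

/-- The Choi representation of a map from `n`-qubit matrices to `1`-qubit matrices:
`Φ_ℰ((x,b),(x',b')) = ℰ(|x⟩⟨x'|)(b,b')`. -/
def choiOfChannel {n : ℕ}
    (E : Matrix (Fin n → Bool) (Fin n → Bool) ℂ → Matrix Bool Bool ℂ) :
    Matrix (Fin (n + 1) → Bool) (Fin (n + 1) → Bool) ℂ :=
  Matrix.of fun w w' =>
    E (Matrix.single (fun i : Fin n => w i.castSucc)
        (fun i : Fin n => w' i.castSucc) 1)
      (w (Fin.last n)) (w' (Fin.last n))

/-- The tensor product `ρ ⊗ ψ` of an `n`-qubit matrix and an `a`-qubit matrix. -/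
def tensorNA {n a : ℕ} (ρ : Matrix (Fin n → Bool) (Fin n → Bool) ℂ)
    (ψ : Matrix (Fin a → Bool) (Fin a → Bool) ℂ) :
    Matrix (Fin (n + a) → Bool) (Fin (n + a) → Bool) ℂ :=
  Matrix.of fun x y =>
    ρ (fun i => x (Fin.castAdd a i)) (fun i => y (Fin.castAdd a i)) *
      ψ (fun j => x (Fin.natAdd n j)) (fun j => y (Fin.natAdd n j))

/-- The channel `ℰ_U : ρ ↦ tr_{all but last qubit}(UρU†)`. -/
def chanU {m : ℕ} (U : Matrix (Fin m → Bool) (Fin m → Bool) ℂ)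
    (ρ : Matrix (Fin m → Bool) (Fin m → Bool) ℂ) : Matrix Bool Bool ℂ :=
  chanLast (U * ρ * U.conjTranspose)

/-- The Choi representation `Φ_U` of `ℰ_U`. -/
def choiU {n : ℕ} (U : Matrix (Fin n → Bool) (Fin n → Bool) ℂ) :
    Matrix (Fin (n + 1) → Bool) (Fin (n + 1) → Bool) ℂ :=
  choiOfChannel (chanU U)

/-- The channel `ℰ_{C,ψ} : ρ ↦ tr_{all but last qubit}(C(ρ⊗ψ)C†)`. -/
def chanAux {n a : ℕ} (C : Matrix (Fin (n + a) → Bool) (Fin (n + a) → Bool) ℂ)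
    (ψ : Matrix (Fin a → Bool) (Fin a → Bool) ℂ)
    (ρ : Matrix (Fin n → Bool) (Fin n → Bool) ℂ) : Matrix Bool Bool ℂ :=
  chanLast (C * tensorNA ρ ψ * C.conjTranspose)

/-- The Choi representation `Φ_{C,ψ}` of `ℰ_{C,ψ}`. -/
def choiAux {n a : ℕ} (C : Matrix (Fin (n + a) → Bool) (Fin (n + a) → Bool) ℂ)
    (ψ : Matrix (Fin a → Bool) (Fin a → Bool) ℂ) :
    Matrix (Fin (n + 1) → Bool) (Fin (n + 1) → Bool) ℂ :=
  choiOfChannel (chanAux C ψ)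

/-- The CZ gate on a subset `S` of the qubits. -/
def czGate {n : ℕ} (S : Finset (Fin n)) :
    Matrix (Fin n → Bool) (Fin n → Bool) ℂ :=
  Matrix.of fun x y =>
    if x = y then (if ∀ i ∈ S, x i = true then -1 else 1) else 0

/-- A layer of CZ gates on a family `G` of (disjoint) subsets of the qubits. -/
def czLayer {n : ℕ} (G : Finset (Finset (Fin n))) :
    Matrix (Fin n → Bool) (Fin n → Bool) ℂ :=
  Matrix.of fun x y =>
    if x = y then ∏ S ∈ G, (if ∀ i ∈ S, x i = true then (-1 : ℂ) else 1) else 0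

/-- A layer of single-qubit gates. -/
def IsLayer {n : ℕ} (L : Matrix (Fin n → Bool) (Fin n → Bool) ℂ) : Prop :=
  ∃ u : Fin n → Matrix Bool Bool ℂ,
    (∀ i, IsUnitaryM (u i)) ∧ ∀ x y, L x y = ∏ i, u i (x i) (y i)

/-- A depth-`d` QAC circuit on `n` qubits: `C = L_0 · M_1 · L_1 ⋯ M_d · L_d` where each `L_i`
is a layer of single-qubit gates and each `M_j` is a product of CZ gates on pairwise
disjoint nonempty subsets of the qubits. -/
structure QACCircuit (n d : ℕ) where
  L : Fin (d + 1) → Matrix (Fin n → Bool) (Fin n → Bool) ℂ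
  G : Fin d → Finset (Finset (Fin n))
  layers : ∀ i, IsLayer (L i)
  gates_nonempty : ∀ j, ∀ S ∈ G j, S.Nonempty
  gates_disjoint : ∀ j, ∀ S ∈ G j, ∀ T ∈ G j, S ≠ T → Disjoint S T

/-- The size of a QAC circuit: the number of CZ gates acting on at least 2 qubits. -/
def QACCircuit.size {n d : ℕ} (c : QACCircuit n d) : ℕ :=
  ∑ j, ((c.G j).filter fun S => 2 ≤ S.card).card

/-- The unitary implemented by a QAC circuit. -/
def QACCircuit.matrix {n d : ℕ} (c : QACCircuit n d) :
    Matrix (Fin n → Bool) (Fin n → Bool) ℂ :=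
  c.L 0 * (List.ofFn fun j : Fin d => czLayer (c.G j) * c.L j.succ).prod

/-- The Fourier coefficient `f̂(S)` of a Boolean function `f : {0,1}^n → {0,1}`. -/
def boolFourierCoeff {n : ℕ} (f : (Fin n → Bool) → Bool) (S : Finset (Fin n)) : ℝ :=
  ((2 : ℝ) ^ n)⁻¹ *
    ∑ x : Fin n → Bool,
      (if f x then (-1 : ℝ) else 1) * ∏ i ∈ S, (if x i then (-1 : ℝ) else 1)

/-- The Fourier weight of a Boolean function above degree `k`. -/
def fweightAbove {n : ℕ} (k : ℕ) (f : (Fin n → Bool) → Bool) : ℝ :=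
  ∑ S : Finset (Fin n), if k < S.card then (boolFourierCoeff f S) ^ 2 else 0

namespace QACAux

variable {m : ℕ}

/-- Restriction of a bit string to a set `T` (coordinates outside `T` set to `false`). -/
def restr (T : Finset (Fin m)) (x : Fin m → Bool) : Fin m → Bool :=
  fun i => if i ∈ T then x i else false

/-- A matrix is supported on the qubits in `T`. -/
def SuppOn (T : Finset (Fin m)) (A : Matrix (Fin m → Bool) (Fin m → Bool) ℂ) : Prop :=
  ∀ x y, A x y = if ∀ i ∉ T, x i = y i then A (restr T x) (restr T y) else 0

lemma restr_restr (T : Finset (Fin m)) (x : Fin m → Bool) :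
    restr T (restr T x) = restr T x := by
  funext i; by_cases h : i ∈ T <;> simp [restr, h]

lemma restr_agree (T : Finset (Fin m)) (x : Fin m → Bool) :
    ∀ i ∉ T, restr T x i = false := by
  intro i hi; simp [restr, hi]

lemma suppOn_conjTranspose {T : Finset (Fin m)} {A : Matrix (Fin m → Bool) (Fin m → Bool) ℂ}
    (hA : SuppOn T A) : SuppOn T A.conjTranspose := by
  intro x y
  have h1 : (∀ i ∉ T, x i = y i) ↔ (∀ i ∉ T, y i = x i) := by
    constructor <;> exact fun h i hi => (h i hi).symm
  simp only [Matrix.conjTranspose_apply, hA y x]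
  by_cases h : ∀ i ∉ T, x i = y i
  · rw [if_pos (h1.mp h), if_pos h]
  · rw [if_neg (fun hh => h (h1.mpr hh)), if_neg h, star_zero]


lemma bool_xor1 : ∀ a b : Bool, a = xor a b ↔ b = false := by decide
lemma bool_xor2 : ∀ a b : Bool, xor a b = a ↔ b = false := by decide

lemma suppOn_mul {T : Finset (Fin m)} {A B : Matrix (Fin m → Bool) (Fin m → Bool) ℂ}
    (hA : SuppOn T A) (hB : SuppOn T B) : SuppOn T (A * B) := by
  intro x y
  by_cases hxy : ∀ i ∉ T, x i = y i
  · rw [if_pos hxy, Matrix.mul_apply, Matrix.mul_apply]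
    have hφinv : Function.Involutive
        (fun (z : Fin m → Bool) => (fun i => if i ∈ T then z i else xor (x i) (z i))) := by
      intro z; funext i
      by_cases h : i ∈ T
      · simp [h]
      · simp only [if_neg h]
        cases x i <;> cases z i <;> rfl
    set φ : (Fin m → Bool) → (Fin m → Bool) :=
      fun z => (fun i => if i ∈ T then z i else xor (x i) (z i)) with hφ
    rw [← Equiv.sum_comp hφinv.toPerm (fun z => A x z * B z y)]
    apply Finset.sum_congr rfl
    intro z _
    have hφz : ∀ i ∉ T, φ z i = xor (x i) (z i) := by
      intro i hi; simp [hφ, if_neg hi]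
    have hφT : ∀ i ∈ T, φ z i = z i := by
      intro i hi; simp [hφ, if_pos hi]
    have hrφ : restr T (φ z) = restr T z := by
      funext i; by_cases h : i ∈ T <;> simp [restr, h, hφT]
    show A x (φ z) * B (φ z) y = A (restr T x) z * B z (restr T y)
    rw [hA x (φ z), hB (φ z) y, hA (restr T x) z, hB z (restr T y)]
    by_cases hz : ∀ i ∉ T, z i = false
    · rw [if_pos, if_pos, if_pos, if_pos, hrφ, restr_restr, restr_restr]
      · intro i hi; rw [restr_agree T y i hi, (hz i hi)]
      · intro i hi; rw [restr_agree T x i hi, (hz i hi)]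
      · intro i hi; rw [hφz i hi, hxy i hi, bool_xor2 (y i) (z i), hz i hi]
      · intro i hi; rw [hφz i hi]; exact (bool_xor1 (x i) (z i)).mpr (hz i hi)
    · have hc1 : ¬ (∀ i ∉ T, x i = φ z i) := by
        intro hcon; apply hz; intro i hi
        have := hcon i hi; rw [hφz i hi] at this
        exact (bool_xor1 (x i) (z i)).mp this
      have hc3 : ¬ (∀ i ∉ T, restr T x i = z i) := by
        intro hcon; apply hz; intro i hi
        have := hcon i hi; rw [restr_agree T x i hi] at this; exact this.symm
      rw [if_neg hc1, if_neg hc3, zero_mul, zero_mul]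
  · rw [if_neg hxy]
    rw [Matrix.mul_apply]
    apply Finset.sum_eq_zero
    intro z _
    rw [hA x z, hB z y]
    by_cases h1 : ∀ i ∉ T, x i = z i
    · by_cases h2 : ∀ i ∉ T, z i = y i
      · exact absurd (fun i hi => (h1 i hi).trans (h2 i hi)) hxy
      · rw [if_neg h2, mul_zero]
    · rw [if_neg h1, zero_mul]


lemma suppOn_commute {T : Finset (Fin m)} {B D : Matrix (Fin m → Bool) (Fin m → Bool) ℂ}
    (hB : SuppOn T B) (hD : SuppOn Tᶜ D) : B * D = D * B := by
  ext x y
  rw [Matrix.mul_apply, Matrix.mul_apply]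
  have hmemc : ∀ i : Fin m, i ∉ Tᶜ ↔ i ∈ T := by
    intro i; simp [Finset.mem_compl]
  have e1 : ∑ z, B x z * D z y
      = B (restr T x) (restr T y) * D (restr Tᶜ x) (restr Tᶜ y) := by
    rw [Finset.sum_eq_single_of_mem (fun i => if i ∈ T then y i else x i)
      (Finset.mem_univ _)]
    · have h1 : ∀ i ∉ T, x i = (if i ∈ T then y i else x i) := by
        intro i hi; rw [if_neg hi]
      have h2 : ∀ i ∉ Tᶜ, (if i ∈ T then y i else x i) = y i := by
        intro i hi; rw [if_pos ((hmemc i).mp hi)]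
      rw [hB x _, if_pos h1, hD _ y, if_pos h2]
      congr 1
      · congr 1
        funext i; by_cases h : i ∈ T <;> simp [restr, h]
      · congr 1
        funext i; by_cases h : i ∈ T <;> simp [restr, Finset.mem_compl, h]
    · intro z _ hz
      obtain ⟨i, hi⟩ := Function.ne_iff.mp hz
      by_cases h : i ∈ T
      · rw [if_pos h] at hi
        rw [hD z y, if_neg, mul_zero]
        intro hcon; exact hi (hcon i (by simp [Finset.mem_compl, h]))
      · rw [if_neg h] at hi
        rw [hB x z, if_neg, zero_mul]
        intro hcon; exact hi (hcon i h).symm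
  have e2 : ∑ z, D x z * B z y
      = B (restr T x) (restr T y) * D (restr Tᶜ x) (restr Tᶜ y) := by
    rw [Finset.sum_eq_single_of_mem (fun i => if i ∈ T then x i else y i)
      (Finset.mem_univ _)]
    · have h1 : ∀ i ∉ Tᶜ, x i = (if i ∈ T then x i else y i) := by
        intro i hi; rw [if_pos ((hmemc i).mp hi)]
      have h2 : ∀ i ∉ T, (if i ∈ T then x i else y i) = y i := by
        intro i hi; rw [if_neg hi]
      rw [hD x _, if_pos h1, hB _ y, if_pos h2]
      rw [mul_comm]
      congr 1
      · congr 1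
        funext i; by_cases h : i ∈ T <;> simp [restr, h]
      · congr 1
        funext i; by_cases h : i ∈ T <;> simp [restr, Finset.mem_compl, h]
    · intro z _ hz
      obtain ⟨i, hi⟩ := Function.ne_iff.mp hz
      by_cases h : i ∈ T
      · rw [if_pos h] at hi
        rw [hD x z, if_neg, zero_mul]
        intro hcon; exact hi (hcon i (by simp [Finset.mem_compl, h])).symm
      · rw [if_neg h] at hi
        rw [hB z y, if_neg, mul_zero]
        intro hcon; exact hi (hcon i h)
  rw [e1, e2]


/-- Product-form matrix (tensor product of single-qubit matrices). -/
def prodForm (v : Fin m → Matrix Bool Bool ℂ) : Matrix (Fin m → Bool) (Fin m → Bool) ℂ :=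
  Matrix.of fun x y => ∏ i, v i (x i) (y i)

lemma prodForm_apply (v : Fin m → Matrix Bool Bool ℂ) (x y : Fin m → Bool) :
    prodForm v x y = ∏ i, v i (x i) (y i) := rfl

lemma prodForm_mul (v w : Fin m → Matrix Bool Bool ℂ) :
    prodForm v * prodForm w = prodForm (fun i => v i * w i) := by
  ext x y
  rw [Matrix.mul_apply]
  have h : ∀ z : Fin m → Bool,
      prodForm v x z * prodForm w z y = ∏ i, (v i (x i) (z i) * w i (z i) (y i)) :=
    fun z => by rw [prodForm_apply, prodForm_apply, ← Finset.prod_mul_distrib]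
  simp_rw [h]
  rw [← Fintype.prod_sum (fun i b => v i (x i) b * w i b (y i))]
  apply Finset.prod_congr rfl
  intro i _
  simp only []
  rw [Matrix.mul_apply]

lemma prodForm_conjTranspose (v : Fin m → Matrix Bool Bool ℂ) :
    (prodForm v).conjTranspose = prodForm (fun i => (v i).conjTranspose) := by
  ext x y
  simp [prodForm, Matrix.conjTranspose_apply, map_prod]

lemma prodForm_one : prodForm (fun _ : Fin m => (1 : Matrix Bool Bool ℂ)) = 1 := by
  ext x y
  by_cases h : x = y
  · subst h
    simp [prodForm, Matrix.one_apply]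
  · obtain ⟨i, hi⟩ := Function.ne_iff.mp h
    rw [Matrix.one_apply_ne h]
    exact Finset.prod_eq_zero (Finset.mem_univ i) (Matrix.one_apply_ne hi)

lemma prodForm_suppOn {T : Finset (Fin m)} {v : Fin m → Matrix Bool Bool ℂ}
    (hv : ∀ i ∉ T, v i = 1) : SuppOn T (prodForm v) := by
  intro x y
  by_cases hxy : ∀ i ∉ T, x i = y i
  · rw [if_pos hxy, prodForm_apply, prodForm_apply]
    apply Finset.prod_congr rfl
    intro i _
    by_cases h : i ∈ T
    · simp [restr, h]
    · rw [hv i h]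
      simp [restr, h, Matrix.one_apply, hxy i h]
  · rw [if_neg hxy]
    push_neg at hxy
    obtain ⟨i, hi, hne⟩ := hxy
    exact Finset.prod_eq_zero (Finset.mem_univ i)
      (by rw [hv i hi]; exact Matrix.one_apply_ne hne)

lemma sandwich_eq {T : Finset (Fin m)} {A W1 W2 : Matrix (Fin m → Bool) (Fin m → Bool) ℂ}
    (hB : SuppOn T (W1.conjTranspose * A * W1)) (h2 : SuppOn Tᶜ W2)
    (hu : W2.conjTranspose * W2 = 1) :
    (W1 * W2).conjTranspose * A * (W1 * W2) = W1.conjTranspose * A * W1 := by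
  have e : (W1 * W2).conjTranspose * A * (W1 * W2)
      = W2.conjTranspose * ((W1.conjTranspose * A * W1) * W2) := by
    simp only [Matrix.conjTranspose_mul, Matrix.mul_assoc]
  rw [e, suppOn_commute hB h2, ← Matrix.mul_assoc, hu, one_mul]

lemma layer_conj {T : Finset (Fin m)} {L A : Matrix (Fin m → Bool) (Fin m → Bool) ℂ}
    (hL : IsLayer L) (hA : SuppOn T A) : SuppOn T (L.conjTranspose * A * L) := by
  obtain ⟨u, hu, hform⟩ := hL
  set v1 : Fin m → Matrix Bool Bool ℂ := fun i => if i ∈ T then u i else 1 with hv1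
  set v2 : Fin m → Matrix Bool Bool ℂ := fun i => if i ∈ T then 1 else u i with hv2
  have h1 : SuppOn T (prodForm v1) := prodForm_suppOn (fun i hi => by simp [hv1, hi])
  have h2 : SuppOn Tᶜ (prodForm v2) := prodForm_suppOn (fun i hi => by
    simp only [hv2]
    rw [if_pos (by simpa [Finset.mem_compl] using hi)])
  have hB : SuppOn T ((prodForm v1).conjTranspose * A * prodForm v1) :=
    suppOn_mul (suppOn_mul (suppOn_conjTranspose h1) hA) h1
  have hu2 : (prodForm v2).conjTranspose * prodForm v2 = 1 := by
    rw [prodForm_conjTranspose, prodForm_mul]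
    have : (fun i => (v2 i).conjTranspose * v2 i)
        = (fun _ : Fin m => (1 : Matrix Bool Bool ℂ)) := by
      funext i
      by_cases h : i ∈ T
      · simp [hv2, h]
      · simp only [hv2, if_neg h]
        exact (hu i).2
    rw [this, prodForm_one]
  have hLpf : L = prodForm v1 * prodForm v2 := by
    rw [prodForm_mul]
    ext x y
    rw [hform x y, prodForm_apply]
    apply Finset.prod_congr rfl
    intro i _
    by_cases h : i ∈ T <;> simp [hv1, hv2, h]
  rw [hLpf, sandwich_eq hB h2 hu2]
  exact hB


lemma suppOn_mono {T T' : Finset (Fin m)} {A : Matrix (Fin m → Bool) (Fin m → Bool) ℂ}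
    (hTT : T ⊆ T') (hA : SuppOn T A) : SuppOn T' A := by
  intro x y
  by_cases hxy : ∀ i ∉ T', x i = y i
  · rw [if_pos hxy]
    by_cases hxyT : ∀ i ∉ T, x i = y i
    · rw [hA x y, if_pos hxyT, hA (restr T' x) (restr T' y), if_pos]
      · have e1 : restr T (restr T' x) = restr T x := by
          funext i
          by_cases h : i ∈ T
          · simp [restr, h, hTT h]
          · simp [restr, h]
        have e2 : restr T (restr T' y) = restr T y := by
          funext i
          by_cases h : i ∈ T
          · simp [restr, h, hTT h]
          · simp [restr, h]
        rw [e1, e2]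
      · intro i hi
        by_cases h : i ∈ T'
        · simp [restr, h, hxyT i hi]
        · simp [restr, h]
    · rw [hA x y, if_neg hxyT, hA (restr T' x) (restr T' y), if_neg]
      push_neg at hxyT
      obtain ⟨i, hi, hne⟩ := hxyT
      have hiT' : i ∈ T' := by
        by_contra hc
        exact hne (hxy i hc)
      intro hcon
      have := hcon i hi
      rw [restr, restr] at this
      simp only [if_pos hiT'] at this
      exact hne this
  · rw [if_neg hxy, hA x y, if_neg]
    push_neg at hxy
    obtain ⟨i, hi, hne⟩ := hxy
    exact fun hcon => hne (hcon i (fun hiT => hi (hTT hiT)))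

lemma czLayer_diag (G : Finset (Finset (Fin m))) :
    czLayer G = Matrix.diagonal
      (fun x => ∏ S ∈ G, (if ∀ i ∈ S, x i = true then (-1 : ℂ) else 1)) := by
  ext x y
  by_cases h : x = y <;> simp [czLayer, Matrix.diagonal, h]

lemma diag_suppOn {T : Finset (Fin m)} {d : (Fin m → Bool) → ℂ}
    (hd : ∀ x, d (restr T x) = d x) : SuppOn T (Matrix.diagonal d) := by
  intro x y
  by_cases hxy : ∀ i ∉ T, x i = y i
  · rw [if_pos hxy]
    by_cases hxyeq : x = y
    · subst hxyeq
      simp [Matrix.diagonal_apply_eq, hd]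
    · obtain ⟨i, hi⟩ := Function.ne_iff.mp hxyeq
      have hiT : i ∈ T := by
        by_contra hc
        exact hi (hxy i hc)
      have hrne : restr T x ≠ restr T y := by
        intro hcon
        apply hi
        have := congrFun hcon i
        simpa [restr, hiT] using this
      rw [Matrix.diagonal_apply_ne _ hxyeq, Matrix.diagonal_apply_ne _ hrne]
  · rw [if_neg hxy]
    push_neg at hxy
    obtain ⟨i, hi, hne⟩ := hxy
    exact Matrix.diagonal_apply_ne _ (fun hcon => hne (congrFun hcon i))

lemma cz_conj {ℓ : ℕ} (hℓ : 1 ≤ ℓ) (G : Finset (Finset (Fin m)))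
    (hdisj : ∀ S ∈ G, ∀ S' ∈ G, S ≠ S' → Disjoint S S')
    (hw : ∀ S ∈ G, S.card ≤ ℓ) (T : Finset (Fin m)) :
    ∃ T' : Finset (Fin m), T'.card ≤ ℓ * T.card ∧
      ∀ A, SuppOn T A → SuppOn T' ((czLayer G).conjTranspose * A * czLayer G) := by
  classical
  set G1 := G.filter (fun S => (S ∩ T).Nonempty) with hG1
  set G2 := G.filter (fun S => ¬ (S ∩ T).Nonempty) with hG2
  set T' := T ∪ G1.biUnion (fun S => S \ T) with hT'
  have hTT' : T ⊆ T' := Finset.subset_union_left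
  refine ⟨T', ?_, ?_⟩
  · -- cardinality bound
    have h1 : T'.card ≤ T.card + (G1.biUnion (fun S => S \ T)).card :=
      Finset.card_union_le _ _
    have h2 : (G1.biUnion (fun S => S \ T)).card ≤ ∑ S ∈ G1, (S \ T).card :=
      Finset.card_biUnion_le
    have h3 : ∀ S ∈ G1, (S \ T).card ≤ ℓ - 1 := by
      intro S hS
      have hSG : S ∈ G := Finset.mem_filter.mp hS |>.1
      have hSne : (S ∩ T).Nonempty := Finset.mem_filter.mp hS |>.2
      have hcard : (S \ T).card + (S ∩ T).card = S.card :=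
        Finset.card_sdiff_add_card_inter S T
      have := hw S hSG
      have := Finset.card_pos.mpr hSne
      omega
    have h4 : ∑ S ∈ G1, (S \ T).card ≤ G1.card * (ℓ - 1) := by
      calc ∑ S ∈ G1, (S \ T).card ≤ ∑ _S ∈ G1, (ℓ - 1) := Finset.sum_le_sum h3
        _ = G1.card * (ℓ - 1) := by rw [Finset.sum_const, smul_eq_mul]
    have h5 : G1.card ≤ T.card := by
      have e1 : G1.card ≤ ∑ S ∈ G1, (S ∩ T).card := by
        rw [Finset.card_eq_sum_ones G1]
        apply Finset.sum_le_sum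
        intro S hS
        exact Finset.card_pos.mpr (Finset.mem_filter.mp hS |>.2)
      have e2 : ∑ S ∈ G1, (S ∩ T).card = (G1.biUnion (fun S => S ∩ T)).card := by
        rw [Finset.card_biUnion]
        intro S hS S' hS' hne
        exact Finset.disjoint_of_subset_left Finset.inter_subset_left
          (Finset.disjoint_of_subset_right Finset.inter_subset_left
            (hdisj S (Finset.mem_filter.mp hS |>.1) S' (Finset.mem_filter.mp hS' |>.1) hne))
      have e3 : (G1.biUnion (fun S => S ∩ T)).card ≤ T.card := by
        apply Finset.card_le_card
        intro i hi
        obtain ⟨S, _, hiS⟩ := Finset.mem_biUnion.mp hi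
        exact (Finset.mem_inter.mp hiS).2
      omega
    have h6 : G1.card * (ℓ - 1) ≤ T.card * (ℓ - 1) := Nat.mul_le_mul_right _ h5
    have h7 : T.card + T.card * (ℓ - 1) = ℓ * T.card := by
      cases' Nat.exists_eq_add_of_le hℓ with k hk
      subst hk
      have hk1 : 1 + k - 1 = k := by omega
      rw [hk1]
      ring
    omega
  · -- support bound
    intro A hA
    have hA' : SuppOn T' A := suppOn_mono hTT' hA
    have hST' : ∀ S ∈ G1, ∀ i ∈ S, i ∈ T' := by
      intro S hS i hi
      by_cases h : i ∈ T
      · exact hTT' h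
      · rw [hT']
        apply Finset.mem_union_right
        exact Finset.mem_biUnion.mpr ⟨S, hS, Finset.mem_sdiff.mpr ⟨hi, h⟩⟩
    have h1 : SuppOn T' (czLayer G1) := by
      rw [czLayer_diag]
      apply diag_suppOn
      intro x
      apply Finset.prod_congr rfl
      intro S hS
      apply if_congr _ rfl rfl
      constructor
      · intro h i hi
        have := h i hi
        rwa [restr, if_pos (hST' S hS i hi)] at this
      · intro h i hi
        rw [restr, if_pos (hST' S hS i hi)]
        exact h i hi
    have hG2T' : ∀ S ∈ G2, ∀ i ∈ S, i ∉ T' := by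
      intro S hS i hi
      have hSG : S ∈ G := Finset.mem_filter.mp hS |>.1
      have hSnt : ¬ (S ∩ T).Nonempty := Finset.mem_filter.mp hS |>.2
      intro hiT'
      rw [hT'] at hiT'
      rcases Finset.mem_union.mp hiT' with h | h
      · exact hSnt ⟨i, Finset.mem_inter.mpr ⟨hi, h⟩⟩
      · obtain ⟨S', hS', hiS'⟩ := Finset.mem_biUnion.mp h
        have hS'G : S' ∈ G := Finset.mem_filter.mp hS' |>.1
        have hS'nt : (S' ∩ T).Nonempty := Finset.mem_filter.mp hS' |>.2
        have hne : S ≠ S' := by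
          intro hcon
          subst hcon
          exact hSnt hS'nt
        exact (Finset.disjoint_left.mp (hdisj S hSG S' hS'G hne) hi)
          (Finset.mem_sdiff.mp hiS').1
    have h2 : SuppOn T'ᶜ (czLayer G2) := by
      rw [czLayer_diag]
      apply diag_suppOn
      intro x
      apply Finset.prod_congr rfl
      intro S hS
      apply if_congr _ rfl rfl
      constructor
      · intro h i hi
        have := h i hi
        rwa [restr, if_pos (Finset.mem_compl.mpr (hG2T' S hS i hi))] at this
      · intro h i hi
        rw [restr, if_pos (Finset.mem_compl.mpr (hG2T' S hS i hi))]
        exact h i hi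
    have hstar : ∀ (H : Finset (Finset (Fin m))) (x : Fin m → Bool),
        star (∏ S ∈ H, (if ∀ i ∈ S, x i = true then (-1 : ℂ) else 1))
          = ∏ S ∈ H, (if ∀ i ∈ S, x i = true then (-1 : ℂ) else 1) := by
      intro H x
      rw [star_prod]
      apply Finset.prod_congr rfl
      intro S _
      split <;> simp
    have hu : (czLayer G2).conjTranspose * czLayer G2 = 1 := by
      rw [czLayer_diag, Matrix.diagonal_conjTranspose, Matrix.diagonal_mul_diagonal,
        ← Matrix.diagonal_one]
      apply congrArg Matrix.diagonal
      funext x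
      simp only [Pi.star_apply]
      rw [hstar, ← Finset.prod_mul_distrib]
      apply Finset.prod_eq_one
      intro S _
      split <;> norm_num
    have hsplit : czLayer G = czLayer G1 * czLayer G2 := by
      rw [czLayer_diag, czLayer_diag, czLayer_diag, Matrix.diagonal_mul_diagonal]
      apply congrArg Matrix.diagonal
      funext x
      exact (Finset.prod_filter_mul_prod_filter_not G _ _).symm
    have hB : SuppOn T' ((czLayer G1).conjTranspose * A * czLayer G1) :=
      suppOn_mul (suppOn_mul (suppOn_conjTranspose h1) hA') h1
    rw [hsplit, sandwich_eq hB h2 hu]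
    exact hB


/-- Conjugation by `W` maps matrices supported on `T` to matrices supported on `T'`. -/
def SuppConj (W : Matrix (Fin m → Bool) (Fin m → Bool) ℂ) (T T' : Finset (Fin m)) : Prop :=
  ∀ A, SuppOn T A → SuppOn T' (W.conjTranspose * A * W)

lemma suppConj_mul {W V : Matrix (Fin m → Bool) (Fin m → Bool) ℂ} {T T1 T2 : Finset (Fin m)}
    (hW : SuppConj W T T1) (hV : SuppConj V T1 T2) : SuppConj (W * V) T T2 := by
  intro A hA
  have e : (W * V).conjTranspose * A * (W * V)
      = V.conjTranspose * (W.conjTranspose * A * W) * V := by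
    simp only [Matrix.conjTranspose_mul, Matrix.mul_assoc]
  rw [e]
  exact hV _ (hW _ hA)

lemma suppConj_one (T : Finset (Fin m)) :
    SuppConj (1 : Matrix (Fin m → Bool) (Fin m → Bool) ℂ) T T := by
  intro A hA
  simpa [Matrix.conjTranspose_one] using hA

lemma list_conj {ℓ : ℕ} (l : List (Matrix (Fin m → Bool) (Fin m → Bool) ℂ))
    (h : ∀ W ∈ l, ∀ T : Finset (Fin m), ∃ T', T'.card ≤ ℓ * T.card ∧ SuppConj W T T') :
    ∀ T : Finset (Fin m), ∃ T', T'.card ≤ ℓ ^ l.length * T.card ∧ SuppConj l.prod T T' := by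
  induction l with
  | nil =>
    intro T
    exact ⟨T, by simp, by simpa [List.prod_nil] using suppConj_one T⟩
  | cons w l ih =>
    intro T
    obtain ⟨T1, hc1, hs1⟩ := h w List.mem_cons_self T
    obtain ⟨T2, hc2, hs2⟩ := ih (fun W hW => h W (List.mem_cons_of_mem _ hW)) T1
    refine ⟨T2, ?_, ?_⟩
    · rw [List.length_cons]
      calc T2.card ≤ ℓ ^ l.length * T1.card := hc2
        _ ≤ ℓ ^ l.length * (ℓ * T.card) := Nat.mul_le_mul_left _ hc1
        _ = ℓ ^ (l.length + 1) * T.card := by ring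
    · rw [List.prod_cons]
      exact suppConj_mul hs1 hs2

lemma circuit_conj {d ℓ : ℕ} (hℓ : 1 ≤ ℓ) (c : QACCircuit m d)
    (hwidth : ∀ j, ∀ S ∈ c.G j, S.card ≤ ℓ) (T : Finset (Fin m)) :
    ∃ T', T'.card ≤ ℓ ^ d * T.card ∧ SuppConj c.matrix T T' := by
  have hlayer : ∀ (i : Fin (d + 1)) (T0 : Finset (Fin m)), SuppConj (c.L i) T0 T0 :=
    fun i T0 A hA => layer_conj (c.layers i) hA
  have helem : ∀ W ∈ (List.ofFn fun j : Fin d => czLayer (c.G j) * c.L j.succ),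
      ∀ T0 : Finset (Fin m), ∃ T1, T1.card ≤ ℓ * T0.card ∧ SuppConj W T0 T1 := by
    intro W hW T0
    obtain ⟨j, rfl⟩ := List.mem_ofFn.mp hW
    obtain ⟨T1, hc, hs⟩ := cz_conj hℓ (c.G j) (c.gates_disjoint j) (hwidth j) T0
    exact ⟨T1, hc, suppConj_mul hs (hlayer j.succ T1)⟩
  obtain ⟨T', hc, hs⟩ := list_conj _ helem T
  refine ⟨T', by simpa [List.length_ofFn] using hc, ?_⟩
  rw [QACCircuit.matrix]
  exact suppConj_mul (hlayer 0 T) hs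


/-- The matrix on `m` qubits representing `|b⟩⟨b'|` on qubit `o` tensored with the
identity-pairing used to express `chanLast` as a trace. -/
def EoutM (o : Fin m) (b b' : Bool) : Matrix (Fin m → Bool) (Fin m → Bool) ℂ :=
  Matrix.of fun u v => if (∀ i, i ≠ o → v i = u i) ∧ v o = b ∧ u o = b' then 1 else 0

lemma eout_suppOn (o : Fin m) (b b' : Bool) : SuppOn {o} (EoutM o b b') := by
  intro u v
  by_cases h : ∀ i ∉ ({o} : Finset (Fin m)), u i = v i
  · rw [if_pos h]
    show (if (∀ i, i ≠ o → v i = u i) ∧ v o = b ∧ u o = b' then (1:ℂ) else 0) = _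
    show _ = (if (∀ i, i ≠ o → restr {o} v i = restr {o} u i)
        ∧ restr {o} v o = b ∧ restr {o} u o = b' then (1:ℂ) else 0)
    apply if_congr _ rfl rfl
    have ho : ∀ x : Fin m → Bool, restr {o} x o = x o := by
      intro x; simp [restr]
    constructor
    · rintro ⟨h1, h2, h3⟩
      refine ⟨fun i hi => ?_, by rw [ho]; exact h2, by rw [ho]; exact h3⟩
      simp [restr, hi]
    · rintro ⟨h1, h2, h3⟩
      rw [ho] at h2; rw [ho] at h3
      exact ⟨fun i hi => (h i (by simpa using hi)).symm, h2, h3⟩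
  · rw [if_neg h]
    push_neg at h
    obtain ⟨i, hi, hne⟩ := h
    simp only [EoutM, Matrix.of_apply]
    rw [if_neg]
    rintro ⟨h1, -, -⟩
    exact hne (h1 i (by simpa using hi)).symm

lemma pauli_diag_sum (q : Fin 4) (hq : q ≠ 0) (u : Bool) :
    pauliMat q u u + pauliMat q (!u) (!u) = 0 := by
  fin_cases q
  · exact absurd rfl hq
  · simp [pauliMat]
  · cases u <;> simp [pauliMat]
  · cases u <;> simp [pauliMat]

def snocEquiv (k : ℕ) : ((Fin k → Bool) × Bool) ≃ (Fin (k + 1) → Bool) :=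
  { toFun := fun p => Fin.snoc p.1 p.2
    invFun := fun y => (fun i => y i.castSucc, y (Fin.last k))
    left_inv := by
      intro p
      ext i
      · simp [Fin.snoc_castSucc]
      · simp [Fin.snoc_last]
    right_inv := by
      intro y
      funext i
      refine Fin.lastCases ?_ ?_ i
      · simp [Fin.snoc_last]
      · intro j; simp [Fin.snoc_castSucc] }

lemma snocEquiv_apply (k : ℕ) (p : (Fin k → Bool) × Bool) :
    snocEquiv k p = Fin.snoc p.1 p.2 := rfl

lemma chanLast_trace {m : ℕ} (o : Fin m) (ho : (o : ℕ) + 1 = m)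
    (M : Matrix (Fin m → Bool) (Fin m → Bool) ℂ) (b b' : Bool) :
    chanLast M b b' = (M * EoutM o b b').trace := by
  obtain ⟨k, rfl⟩ : ∃ k, m = k + 1 := ⟨o, ho.symm⟩
  have holast : o = Fin.last k := Fin.ext (by simpa using Nat.succ_injective ho)
  subst holast
  have key : ∀ f : (Fin (k + 1) → Bool) → ℂ,
      (∑ y, f y) = ∑ z : Fin k → Bool, ∑ c : Bool, f (Fin.snoc z c) := by
    intro f
    rw [← Equiv.sum_comp (snocEquiv k) f, Fintype.sum_prod_type]
    simp only [snocEquiv_apply]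
  have hE : ∀ (z z' : Fin k → Bool) (c c' : Bool),
      EoutM (Fin.last k) b b' (Fin.snoc z' c') (Fin.snoc z c)
        = if z = z' ∧ c = b ∧ c' = b' then 1 else 0 := by
    intro z z' c c'
    show (if _ then (1:ℂ) else 0) = _
    apply if_congr _ rfl rfl
    simp only [Fin.snoc_last]
    constructor
    · rintro ⟨h1, h2, h3⟩
      refine ⟨funext fun j => ?_, h2, h3⟩
      have := h1 j.castSucc (Fin.castSucc_lt_last j).ne
      simpa [Fin.snoc_castSucc] using this
    · rintro ⟨h1, h2, h3⟩
      subst h1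
      exact ⟨fun i hi => by
        obtain ⟨j, rfl⟩ := Fin.exists_castSucc_eq.mpr hi
        simp [Fin.snoc_castSucc], h2, h3⟩
  have lhs : chanLast M b b' = ∑ z : Fin k → Bool, M (Fin.snoc z b) (Fin.snoc z b') := rfl
  rw [lhs, Matrix.trace]
  simp only [Matrix.diag_apply, Matrix.mul_apply]
  rw [key (fun y => ∑ y', M y y' * EoutM (Fin.last k) b b' y' y)]
  have inner : ∀ (z : Fin k → Bool) (c : Bool),
      (∑ y', M (Fin.snoc z c) y' * EoutM (Fin.last k) b b' y' (Fin.snoc z c))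
        = if c = b then M (Fin.snoc z c) (Fin.snoc z b') else 0 := by
    intro z c
    rw [key (fun y' => M (Fin.snoc z c) y' * EoutM (Fin.last k) b b' y' (Fin.snoc z c))]
    simp only [hE]
    simp [Finset.sum_ite_eq, ite_and, mul_ite, mul_one, mul_zero]
  simp only [inner]
  apply Finset.sum_congr rfl
  intro z _
  simp


/-- Flip the bit at position `j`. -/
def flipAt (j : Fin m) (x : Fin m → Bool) : Fin m → Bool :=
  fun i => if i = j then !(x i) else x i

lemma flipAt_apply_self (j : Fin m) (x : Fin m → Bool) : flipAt j x j = !(x j) := by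
  simp [flipAt]

lemma flipAt_apply_ne {i j : Fin m} (h : i ≠ j) (x : Fin m → Bool) : flipAt j x i = x i := by
  simp [flipAt, h]

lemma flipAt_invol (j : Fin m) : Function.Involutive (flipAt j) := by
  intro x; funext i
  by_cases h : i = j
  · subst h; simp [flipAt]
  · simp [flipAt, h]

lemma flipAt_eq_iff (j : Fin m) (x y : Fin m → Bool) : flipAt j x = y ↔ x = flipAt j y := by
  constructor
  · rintro rfl; exact (flipAt_invol j x).symm
  · rintro rfl; exact flipAt_invol j y

lemma suppOn_ne {T : Finset (Fin m)} {A : Matrix (Fin m → Bool) (Fin m → Bool) ℂ}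
    (hA : SuppOn T A) {j : Fin m} (hj : j ∉ T) {u v : Fin m → Bool}
    (huv : u j ≠ v j) : A u v = 0 := by
  rw [hA u v, if_neg]
  intro hcon
  exact huv (hcon j hj)

lemma suppOn_flip {T : Finset (Fin m)} {A : Matrix (Fin m → Bool) (Fin m → Bool) ℂ}
    (hA : SuppOn T A) {j : Fin m} (hj : j ∉ T) (u v : Fin m → Bool) :
    A (flipAt j u) (flipAt j v) = A u v := by
  rw [hA (flipAt j u) (flipAt j v), hA u v]
  have hcond : (∀ i ∉ T, flipAt j u i = flipAt j v i) ↔ (∀ i ∉ T, u i = v i) := by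
    constructor
    · intro h i hi
      have hh := h i hi
      by_cases hij : i = j
      · subst hij
        rw [flipAt_apply_self, flipAt_apply_self] at hh
        exact Bool.not_inj hh
      · rwa [flipAt_apply_ne hij, flipAt_apply_ne hij] at hh
    · intro h i hi
      by_cases hij : i = j
      · subst hij
        rw [flipAt_apply_self, flipAt_apply_self, h i hi]
      · rw [flipAt_apply_ne hij, flipAt_apply_ne hij]
        exact h i hi
  have hru : restr T (flipAt j u) = restr T u := by
    funext i
    by_cases hiT : i ∈ T
    · have hij : i ≠ j := fun hcon => hj (hcon ▸ hiT)
      simp [restr, hiT, flipAt_apply_ne hij]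
    · simp [restr, hiT]
  have hrv : restr T (flipAt j v) = restr T v := by
    funext i
    by_cases hiT : i ∈ T
    · have hij : i ≠ j := fun hcon => hj (hcon ▸ hiT)
      simp [restr, hiT, flipAt_apply_ne hij]
    · simp [restr, hiT]
  by_cases h : ∀ i ∉ T, u i = v i
  · rw [if_pos (hcond.mpr h), if_pos h, hru, hrv]
  · rw [if_neg (fun hc => h (hcond.mp hc)), if_neg h]

end QACAux

set_option maxHeartbeats 2000000 in
/-- A QAC circuit all of whose CZ gates have width at most `ℓ` has no
Pauli weight above degree `ℓ^d + 1`. -/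
theorem qac_narrow_gates_low_degree (n a d ℓ : ℕ) (hℓ : 2 ≤ ℓ)
    (c : QACCircuit (n + a) d) (hwidth : ∀ j, ∀ S ∈ c.G j, S.card ≤ ℓ)
    (ψ : Matrix (Fin a → Bool) (Fin a → Bool) ℂ)
    (hψ : ψ.PosSemidef) (hψtr : ψ.trace = 1) :
    weightAbove (ℓ ^ d + 1) (choiAux (n := n) (a := a) c.matrix ψ) = 0 := by
  classical
  rw [weightAbove]
  apply Finset.sum_eq_zero
  intro p _
  by_cases hdeg : ℓ ^ d + 1 < pauliDeg p
  swap
  · rw [if_neg hdeg]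
  rw [if_pos hdeg]
  have hdegle' : pauliDeg p ≤ n + 1 := by
    have h := Finset.card_filter_le (Finset.univ : Finset (Fin (n + 1)))
      (fun i => p i ≠ 0)
    simpa [pauliDeg] using h
  have hpow : 1 ≤ ℓ ^ d := Nat.one_le_pow _ _ (by omega)
  have hn : 0 < n := by omega
  suffices hc : pauliCoeff (choiAux (n := n) (a := a) c.matrix ψ) p = 0 by
    rw [hc]
    simp
  set o : Fin (n + a) := ⟨n + a - 1, by omega⟩ with hodef
  have ho : (o : ℕ) + 1 = n + a := by
    rw [hodef]
    simp
    omega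
  obtain ⟨T, hTcard, hTconj⟩ :=
    QACAux.circuit_conj (show 1 ≤ ℓ by omega) c hwidth {o}
  have hTle : T.card ≤ ℓ ^ d := by simpa using hTcard
  set B : Finset (Fin n) := Finset.univ.filter (fun i => p i.castSucc ≠ 0) with hBdef
  have hdegle : pauliDeg p ≤ B.card + 1 := by
    have hsub : Finset.univ.filter (fun j : Fin (n + 1) => p j ≠ 0)
        ⊆ insert (Fin.last n) (B.image Fin.castSucc) := by
      intro j hj
      rcases eq_or_ne j (Fin.last n) with h | h
      · exact Finset.mem_insert.mpr (Or.inl h)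
      · obtain ⟨i, rfl⟩ := Fin.exists_castSucc_eq.mpr h
        refine Finset.mem_insert.mpr (Or.inr (Finset.mem_image.mpr ⟨i, ?_, rfl⟩))
        exact Finset.mem_filter.mpr ⟨Finset.mem_univ _, (Finset.mem_filter.mp hj).2⟩
    calc pauliDeg p = (Finset.univ.filter (fun j : Fin (n + 1) => p j ≠ 0)).card := rfl
      _ ≤ (insert (Fin.last n) (B.image Fin.castSucc)).card :=
          Finset.card_le_card hsub
      _ ≤ (B.image Fin.castSucc).card + 1 := Finset.card_insert_le _ _
      _ = B.card + 1 := by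
          rw [Finset.card_image_of_injective _ (Fin.castSucc_injective n)]
  obtain ⟨i0, hi0B, hi0T⟩ : ∃ i0 ∈ B, Fin.castAdd a i0 ∉ T := by
    by_contra hcon
    push_neg at hcon
    have himg : B.image (Fin.castAdd a) ⊆ T := by
      intro j hj
      obtain ⟨i, hi, rfl⟩ := Finset.mem_image.mp hj
      exact hcon i hi
    have hinj : Function.Injective (Fin.castAdd a : Fin n → Fin (n + a)) := by
      intro i j hij
      exact Fin.ext (by simpa using congrArg Fin.val hij)
    have hcard : B.card ≤ T.card := by
      rw [← Finset.card_image_of_injective B hinj]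
      exact Finset.card_le_card himg
    omega
  have hq : p i0.castSucc ≠ 0 := (Finset.mem_filter.mp hi0B).2
  set C := QACCircuit.matrix c with hC
  set A : Bool → Bool → Matrix (Fin (n + a) → Bool) (Fin (n + a) → Bool) ℂ :=
    fun b1 b2 => C.conjTranspose * QACAux.EoutM o b1 b2 * C with hAdef
  have hA : ∀ b1 b2, QACAux.SuppOn T (A b1 b2) :=
    fun b1 b2 => hTconj _ (QACAux.eout_suppOn o b1 b2)
  have hPhi : ∀ w w' : Fin (n + 1) → Bool,
      choiAux (n := n) (a := a) C ψ w w'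
        = ∑ y : Fin (n + a) → Bool, ∑ y' : Fin (n + a) → Bool,
            tensorNA (Matrix.single (fun i : Fin n => w i.castSucc)
              (fun i : Fin n => w' i.castSucc) 1) ψ y y'
              * A (w (Fin.last n)) (w' (Fin.last n)) y' y := by
    intro w w'
    have e0 : choiAux (n := n) (a := a) C ψ w w'
        = chanLast (C * tensorNA (Matrix.single
            (fun i : Fin n => w i.castSucc) (fun i : Fin n => w' i.castSucc) 1) ψ
            * C.conjTranspose) (w (Fin.last n)) (w' (Fin.last n)) := rfl
    rw [e0, QACAux.chanLast_trace o ho]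
    set X := tensorNA (Matrix.single (fun i : Fin n => w i.castSucc)
      (fun i : Fin n => w' i.castSucc) 1) ψ with hX
    have e1 : C * X * C.conjTranspose
          * QACAux.EoutM o (w (Fin.last n)) (w' (Fin.last n))
        = C * (X * (C.conjTranspose
          * QACAux.EoutM o (w (Fin.last n)) (w' (Fin.last n)))) := by
      simp only [Matrix.mul_assoc]
    rw [e1, Matrix.trace_mul_comm]
    have e2 : X * (C.conjTranspose
          * QACAux.EoutM o (w (Fin.last n)) (w' (Fin.last n))) * C
        = X * A (w (Fin.last n)) (w' (Fin.last n)) := by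
      rw [hAdef]
      simp only [Matrix.mul_assoc]
    rw [e2, Matrix.trace]
    simp only [Matrix.diag_apply, Matrix.mul_apply]
  -- flip machinery
  set j0 : Fin (n + 1) := i0.castSucc with hj0def
  have hj0last : j0 ≠ Fin.last n := by
    rw [hj0def]; exact (Fin.castSucc_lt_last i0).ne
  set fl : (Fin (n + 1) → Bool) → (Fin (n + 1) → Bool) := QACAux.flipAt j0 with hfldef
  have hfl_last : ∀ w : Fin (n + 1) → Bool, fl w (Fin.last n) = w (Fin.last n) :=
    fun w => QACAux.flipAt_apply_ne (Ne.symm hj0last) w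
  set ca0 : Fin (n + a) := Fin.castAdd a i0 with hca0def
  have hfl_cs : ∀ w : Fin (n + 1) → Bool,
      (fun i : Fin n => fl w i.castSucc)
        = QACAux.flipAt i0 (fun i : Fin n => w i.castSucc) := by
    intro w; funext i
    by_cases h : i = i0
    · subst h
      rw [hfldef, hj0def, QACAux.flipAt_apply_self, QACAux.flipAt_apply_self]
    · have h1 : i.castSucc ≠ j0 := by
        rw [hj0def]; exact fun hc => h (Fin.castSucc_injective n hc)
      rw [hfldef, QACAux.flipAt_apply_ne h1, QACAux.flipAt_apply_ne h]
  have hflm_ca : ∀ y : Fin (n + a) → Bool,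
      (fun i : Fin n => QACAux.flipAt ca0 y (Fin.castAdd a i))
        = QACAux.flipAt i0 (fun i : Fin n => y (Fin.castAdd a i)) := by
    intro y; funext i
    by_cases h : i = i0
    · subst h
      rw [hca0def, QACAux.flipAt_apply_self, QACAux.flipAt_apply_self]
    · have h1 : Fin.castAdd a i ≠ ca0 := by
        rw [hca0def]
        intro hc
        exact h (Fin.ext (by simpa using congrArg Fin.val hc))
      rw [QACAux.flipAt_apply_ne h1, QACAux.flipAt_apply_ne h]
  have hflm_na : ∀ (y : Fin (n + a) → Bool) (j : Fin a),
      QACAux.flipAt ca0 y (Fin.natAdd n j) = y (Fin.natAdd n j) := by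
    intro y j
    apply QACAux.flipAt_apply_ne
    rw [hca0def]
    intro hc
    have h1 := congrArg Fin.val hc
    have h2 := i0.isLt
    simp [Fin.natAdd, Fin.castAdd, Fin.castLE] at h1
    omega
  have hPhiflip : ∀ w w' : Fin (n + 1) → Bool,
      choiAux (n := n) (a := a) C ψ (fl w) (fl w')
        = choiAux (n := n) (a := a) C ψ w w' := by
    intro w w'
    rw [hPhi, hPhi, hfl_last w, hfl_last w', hfl_cs w, hfl_cs w']
    apply Fintype.sum_equiv ((QACAux.flipAt_invol ca0).toPerm)
    intro y
    apply Fintype.sum_equiv ((QACAux.flipAt_invol ca0).toPerm)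
    intro y'
    simp only [Function.Involutive.coe_toPerm]
    rw [QACAux.suppOn_flip (hA (w (Fin.last n)) (w' (Fin.last n))) hi0T y' y]
    congr 1
    simp only [tensorNA, Matrix.of_apply, Matrix.single]
    rw [hflm_ca y, hflm_ca y']
    congr 1
    · simp only [QACAux.flipAt_eq_iff]
    · congr 1
      · funext j; rw [hflm_na y j]
      · funext j; rw [hflm_na y' j]
  have hvanish : ∀ w w' : Fin (n + 1) → Bool, w j0 ≠ w' j0 →
      choiAux (n := n) (a := a) C ψ w w' = 0 := by
    intro w w' hne
    rw [hPhi]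
    apply Finset.sum_eq_zero; intro y _
    apply Finset.sum_eq_zero; intro y' _
    by_cases h1 : ((fun i : Fin n => w i.castSucc) = fun i : Fin n => y (Fin.castAdd a i))
        ∧ ((fun i : Fin n => w' i.castSucc) = fun i : Fin n => y' (Fin.castAdd a i))
    · have hAzero : A (w (Fin.last n)) (w' (Fin.last n)) y' y = 0 := by
        apply QACAux.suppOn_ne (hA _ _) hi0T
        have e1 : y ca0 = w j0 := by
          rw [hca0def, hj0def]
          exact (congrFun h1.1 i0).symm
        have e2 : y' ca0 = w' j0 := by
          rw [hca0def, hj0def]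
          exact (congrFun h1.2 i0).symm
        rw [e1, e2]
        exact Ne.symm hne
      rw [hAzero, mul_zero]
    · simp only [tensorNA, Matrix.of_apply, Matrix.single]
      rw [if_neg h1, zero_mul, zero_mul]
  -- final cancellation
  rw [pauliCoeff, mul_eq_zero]
  right
  rw [Matrix.trace]
  simp only [Matrix.diag_apply, Matrix.mul_apply]
  have hsum : (∑ q : (Fin (n + 1) → Bool) × (Fin (n + 1) → Bool),
      pauliTensor p q.1 q.2 * choiAux (n := n) (a := a) C ψ q.2 q.1) = 0 := by
    apply Finset.sum_involution (fun q _ => (fl q.1, fl q.2))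
    · intro q hqmem
      by_cases hcase : q.1 j0 = q.2 j0
      · show pauliTensor p q.1 q.2 * choiAux (n := n) (a := a) C ψ q.2 q.1
            + pauliTensor p (fl q.1) (fl q.2)
              * choiAux (n := n) (a := a) C ψ (fl q.2) (fl q.1) = 0
        rw [hPhiflip q.2 q.1, ← add_mul]
        suffices hp : pauliTensor p q.1 q.2 + pauliTensor p (fl q.1) (fl q.2) = 0 by
          rw [hp, zero_mul]
        have hsplit1 : pauliTensor p q.1 q.2
            = pauliMat (p j0) (q.1 j0) (q.2 j0)
              * ∏ i ∈ Finset.univ.erase j0, pauliMat (p i) (q.1 i) (q.2 i) :=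
          (Finset.mul_prod_erase _ _ (Finset.mem_univ j0)).symm
        have hsplit2 : pauliTensor p (fl q.1) (fl q.2)
            = pauliMat (p j0) (fl q.1 j0) (fl q.2 j0)
              * ∏ i ∈ Finset.univ.erase j0, pauliMat (p i) (fl q.1 i) (fl q.2 i) :=
          (Finset.mul_prod_erase _ _ (Finset.mem_univ j0)).symm
        have herase : (∏ i ∈ Finset.univ.erase j0, pauliMat (p i) (fl q.1 i) (fl q.2 i))
            = ∏ i ∈ Finset.univ.erase j0, pauliMat (p i) (q.1 i) (q.2 i) := by
          apply Finset.prod_congr rfl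
          intro i hi
          have hij : i ≠ j0 := Finset.ne_of_mem_erase hi
          rw [hfldef, QACAux.flipAt_apply_ne hij, QACAux.flipAt_apply_ne hij]
        rw [hsplit1, hsplit2, herase, ← add_mul]
        have hm0 : pauliMat (p j0) (q.1 j0) (q.2 j0)
            + pauliMat (p j0) (fl q.1 j0) (fl q.2 j0) = 0 := by
          rw [hfldef, QACAux.flipAt_apply_self, QACAux.flipAt_apply_self, hcase]
          exact QACAux.pauli_diag_sum (p j0) (by rw [hj0def]; exact hq) (q.2 j0)
        rw [hm0, zero_mul]
      · show pauliTensor p q.1 q.2 * choiAux (n := n) (a := a) C ψ q.2 q.1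
            + pauliTensor p (fl q.1) (fl q.2)
              * choiAux (n := n) (a := a) C ψ (fl q.2) (fl q.1) = 0
        rw [hvanish q.2 q.1 (Ne.symm hcase), hvanish (fl q.2) (fl q.1) (by
          rw [hfldef, QACAux.flipAt_apply_self, QACAux.flipAt_apply_self]
          exact fun hcon => hcase (Bool.not_inj hcon).symm), mul_zero, mul_zero, add_zero]
    · intro q hqmem hne0 hcon
      have h1 : fl q.1 = q.1 := congrArg Prod.fst hcon
      have h2 := congrFun h1 j0
      rw [hfldef, QACAux.flipAt_apply_self] at h2
      exact (Bool.not_ne_self _) h2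
    · intro q hqmem
      exact Finset.mem_univ _
    · intro q hqmem
      show (fl (fl q.1), fl (fl q.2)) = q
      rw [hfldef, QACAux.flipAt_invol j0 q.1, QACAux.flipAt_invol j0 q.2]
  calc (∑ w : Fin (n + 1) → Bool, ∑ w' : Fin (n + 1) → Bool,
        pauliTensor p w w' * choiAux (n := n) (a := a) C ψ w' w)
      = ∑ q : (Fin (n + 1) → Bool) × (Fin (n + 1) → Bool),
          pauliTensor p q.1 q.2 * choiAux (n := n) (a := a) C ψ q.2 q.1 :=
        (Fintype.sum_prod_type (f := fun q : (Fin (n + 1) → Bool) × (Fin (n + 1) → Bool)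
          => pauliTensor p q.1 q.2 * choiAux (n := n) (a := a) C ψ q.2 q.1)).symm
    _ = 0 := hsum
end
end

section
/- Let ℓ ≥ 1, let V_0, …, V_m be n-qubit unitaries and let S_1, …, S_m be nonempty subsets of the n qubits, each of size at least ℓ. Set C = V_0 · CZ_{S_1} · V_1 · CZ_{S_2} ⋯ CZ_{S_m} · V_m and C̃ = V_0 · V_1 ⋯ V_m. Then for every k ≥ 0, W^{>k}[Φ_C] ≤ ( √(W^{>k}[Φ_{C̃}]) + 8√2 · m · 2^{-ℓ/2} )². -/
open scoped BigOperators ComplexOrder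

noncomputable section

namespace RWCZ

open Matrix Finset

local notation "⟪" x ", " y "⟫" => @inner ℂ _ _ x y

/-- Frobenius embedding into EuclideanSpace. -/
def emb {α : Type*} [Fintype α] (A : Matrix α α ℂ) : EuclideanSpace ℂ (α × α) :=
  WithLp.toLp 2 (fun q : α × α => A q.1 q.2)

lemma emb_norm_sq {α : Type*} [Fintype α] (A : Matrix α α ℂ) :
    ‖emb A‖ ^ 2 = frobSq A := by
  rw [EuclideanSpace.norm_eq, Real.sq_sqrt (by positivity), frobSq, Fintype.sum_prod_type]
  simp [emb]

lemma emb_sub {α : Type*} [Fintype α] (A B : Matrix α α ℂ) :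
    emb (A - B) = emb A - emb B := by
  ext q; simp [emb]

lemma inner_emb {α : Type*} [Fintype α] (A B : Matrix α α ℂ) :
    ⟪emb A, emb B⟫ = ∑ x : α, ∑ y : α, (starRingEnd ℂ) (A x y) * B x y := by
  rw [PiLp.inner_apply, Fintype.sum_prod_type]
  simp [emb, RCLike.inner_apply, mul_comm]

lemma pauliMat_conj (a : Fin 4) (b b' : Bool) :
    (starRingEnd ℂ) (pauliMat a b b') = pauliMat a b' b := by
  fin_cases a <;> cases b <;> cases b' <;>
    simp [pauliMat, Complex.conj_I]

lemma pauliMat_orth (a c : Fin 4) :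
    ∑ b : Bool, ∑ b' : Bool,
      (starRingEnd ℂ) (pauliMat a b b') * pauliMat c b b' = if a = c then 2 else 0 := by
  fin_cases a <;> fin_cases c <;>
    simp [pauliMat, Fintype.sum_bool, Complex.conj_I] <;> ring

end RWCZ
namespace RWCZ
open Matrix Finset
local notation "⟪" x ", " y "⟫" => @inner ℂ _ _ x y
variable {N : ℕ}

lemma pauliTensor_conj (p : Fin N → Fin 4) (x y : Fin N → Bool) :
    (starRingEnd ℂ) (pauliTensor p x y) = pauliTensor p y x := by
  simp [pauliTensor, map_prod, pauliMat_conj]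

lemma pauliTensor_orth (p q : Fin N → Fin 4) :
    ∑ x : Fin N → Bool, ∑ y : Fin N → Bool,
      (starRingEnd ℂ) (pauliTensor p x y) * pauliTensor q x y =
    if p = q then (2 : ℂ) ^ N else 0 := by
  have h1 : ∀ x y : Fin N → Bool,
      (starRingEnd ℂ) (pauliTensor p x y) * pauliTensor q x y =
        ∏ i, (starRingEnd ℂ) (pauliMat (p i) (x i) (y i)) * pauliMat (q i) (x i) (y i) := by
    intro x y
    simp [pauliTensor, map_prod, Finset.prod_mul_distrib]
  simp_rw [h1]
  have h2 : ∀ x : Fin N → Bool,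
      ∑ y : Fin N → Bool,
        ∏ i, (starRingEnd ℂ) (pauliMat (p i) (x i) (y i)) * pauliMat (q i) (x i) (y i) =
      ∏ i, ∑ b' : Bool, (starRingEnd ℂ) (pauliMat (p i) (x i) b') * pauliMat (q i) (x i) b' := by
    intro x
    rw [Fintype.prod_sum]
  simp_rw [h2]
  rw [← Fintype.prod_sum fun i (b : Bool) =>
      ∑ b' : Bool, (starRingEnd ℂ) (pauliMat (p i) b b') * pauliMat (q i) b b']
  simp_rw [pauliMat_orth]
  by_cases h : p = q
  · subst h; simp
  · rw [if_neg h]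
    obtain ⟨i, hi⟩ : ∃ i, p i ≠ q i := by
      by_contra hc; push_neg at hc; exact h (funext hc)
    exact Finset.prod_eq_zero (Finset.mem_univ i) (by simp [hi])

lemma inner_emb_pauli (p : Fin N → Fin 4) (A : Matrix (Fin N → Bool) (Fin N → Bool) ℂ) :
    ⟪emb (pauliTensor p), emb A⟫ = (pauliTensor p * A).trace := by
  rw [inner_emb, Matrix.trace]
  simp only [Matrix.diag, Matrix.mul_apply]
  rw [Finset.sum_comm]
  refine Finset.sum_congr rfl fun x _ => Finset.sum_congr rfl fun y _ => ?_
  rw [pauliTensor_conj]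

/-- projection of `A` onto high-degree Pauli coefficients, as a Euclidean vector -/
def gk (k : ℕ) (A : Matrix (Fin N → Bool) (Fin N → Bool) ℂ) :
    EuclideanSpace ℂ (Fin N → Fin 4) :=
  WithLp.toLp 2 (fun p => if k < pauliDeg p then pauliCoeff A p else 0)

lemma gk_norm_sq (k : ℕ) (A : Matrix (Fin N → Bool) (Fin N → Bool) ℂ) :
    ‖gk k A‖ ^ 2 = weightAbove k A := by
  rw [EuclideanSpace.norm_eq, Real.sq_sqrt (by positivity), weightAbove]
  refine Finset.sum_congr rfl fun p _ => ?_
  by_cases h : k < pauliDeg p <;> simp [gk, h]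

lemma weightAbove_nonneg (k : ℕ) (A : Matrix (Fin N → Bool) (Fin N → Bool) ℂ) :
    0 ≤ weightAbove k A := by
  rw [← gk_norm_sq]; positivity

lemma gk_sub (k : ℕ) (A B : Matrix (Fin N → Bool) (Fin N → Bool) ℂ) :
    gk k (A - B) = gk k A - gk k B := by
  ext p
  have : pauliCoeff (A - B) p = pauliCoeff A p - pauliCoeff B p := by
    simp [pauliCoeff, Matrix.mul_sub, mul_sub]
  by_cases h : k < pauliDeg p <;>
    simp [gk, h, this, PiLp.sub_apply]

end RWCZ
namespace RWCZ
open Matrix Finset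
local notation "⟪" x ", " y "⟫" => @inner ℂ _ _ x y
variable {N : ℕ}

lemma pauli_orthonormal :
    Orthonormal ℂ (fun p : Fin N → Fin 4 =>
      ((Real.sqrt ((2 : ℝ) ^ N) : ℂ))⁻¹ • emb (pauliTensor p)) := by
  rw [orthonormal_iff_ite]
  intro p q
  rw [inner_smul_left, inner_smul_right, inner_emb]
  simp_rw [pauliTensor_orth]
  have h2 : ((Real.sqrt ((2:ℝ)^N) : ℂ))⁻¹ ≠ 0 := by
    simp only [ne_eq, inv_eq_zero, Complex.ofReal_eq_zero]
    positivity
  have hs : ((Real.sqrt ((2:ℝ)^N) : ℂ)) * (Real.sqrt ((2:ℝ)^N) : ℂ) = (2:ℂ)^N := by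
    rw [← Complex.ofReal_mul, Real.mul_self_sqrt (by positivity)]
    push_cast; ring
  rw [map_inv₀, Complex.conj_ofReal]
  by_cases h : p = q
  · rw [if_pos h, if_pos h]
    field_simp
    rw [← hs]; ring
  · rw [if_neg h, if_neg h, mul_zero, mul_zero]

lemma pauliCoeff_eq (k : ℕ) (A : Matrix (Fin N → Bool) (Fin N → Bool) ℂ)
    (p : Fin N → Fin 4) :
    ‖pauliCoeff A p‖ ^ 2 =
      ((2:ℝ)^N)⁻¹ *
        ‖⟪((Real.sqrt ((2 : ℝ) ^ N) : ℂ))⁻¹ • emb (pauliTensor p), emb A⟫‖ ^ 2 := by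
  rw [inner_smul_left, inner_emb_pauli, map_inv₀, Complex.conj_ofReal]
  rw [pauliCoeff]
  rw [norm_mul, norm_mul, norm_inv, norm_inv, Complex.norm_real, norm_pow, Complex.norm_two,
    Real.norm_of_nonneg (Real.sqrt_nonneg _), mul_pow, mul_pow, inv_pow, inv_pow,
    Real.sq_sqrt (by positivity)]
  ring

lemma gk_norm_le (k : ℕ) (A : Matrix (Fin N → Bool) (Fin N → Bool) ℂ) :
    ‖gk k A‖ ^ 2 ≤ ((2:ℝ)^N)⁻¹ * frobSq A := by
  rw [EuclideanSpace.norm_eq, Real.sq_sqrt (by positivity)]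
  have h1 : ∀ p : Fin N → Fin 4, ‖gk k A p‖ ^ 2 ≤
      ((2:ℝ)^N)⁻¹ *
        ‖⟪((Real.sqrt ((2 : ℝ) ^ N) : ℂ))⁻¹ • emb (pauliTensor p), emb A⟫‖ ^ 2 := by
    intro p
    by_cases h : k < pauliDeg p
    · rw [show gk k A p = pauliCoeff A p by simp [gk, h]]
      rw [pauliCoeff_eq k]
    · rw [show gk k A p = 0 by simp [gk, h]]
      simp only [norm_zero, ne_eq, OfNat.ofNat_ne_zero, not_false_eq_true, zero_pow]
      positivity
  calc ∑ p, ‖gk k A p‖ ^ 2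
      ≤ ∑ p : Fin N → Fin 4, ((2:ℝ)^N)⁻¹ *
        ‖⟪((Real.sqrt ((2 : ℝ) ^ N) : ℂ))⁻¹ • emb (pauliTensor p), emb A⟫‖ ^ 2 :=
        Finset.sum_le_sum fun p _ => h1 p
    _ = ((2:ℝ)^N)⁻¹ * ∑ p : Fin N → Fin 4,
        ‖⟪((Real.sqrt ((2 : ℝ) ^ N) : ℂ))⁻¹ • emb (pauliTensor p), emb A⟫‖ ^ 2 := by
        rw [Finset.mul_sum]
    _ ≤ ((2:ℝ)^N)⁻¹ * ‖emb A‖ ^ 2 := by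
        gcongr
        exact pauli_orthonormal.sum_inner_products_le (emb A)
    _ = ((2:ℝ)^N)⁻¹ * frobSq A := by rw [emb_norm_sq]

end RWCZ
namespace RWCZ
open Matrix Finset
variable {N : ℕ}

lemma frobSq_eq_re_trace {α : Type*} [Fintype α] [DecidableEq α] (A : Matrix α α ℂ) :
    frobSq A = ((Aᴴ * A).trace).re := by
  rw [frobSq, Matrix.trace, Complex.re_sum, Finset.sum_comm]
  refine Finset.sum_congr rfl fun y _ => ?_
  simp only [Matrix.diag, Matrix.mul_apply, Matrix.conjTranspose_apply]
  rw [Complex.re_sum]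
  refine Finset.sum_congr rfl fun x _ => ?_
  rw [mul_comm]
  rw [show star (A x y) = (starRingEnd ℂ) (A x y) from rfl, Complex.mul_conj]
  simp [Complex.sq_norm]

lemma frobSq_unitary_left {α : Type*} [Fintype α] [DecidableEq α]
    {U : Matrix α α ℂ} (hU : IsUnitaryM U) (A : Matrix α α ℂ) :
    frobSq (U * A) = frobSq A := by
  rw [frobSq_eq_re_trace, frobSq_eq_re_trace]
  rw [Matrix.conjTranspose_mul, Matrix.mul_assoc, ← Matrix.mul_assoc Uᴴ U A, hU.2, Matrix.one_mul]

lemma frobSq_unitary_right {α : Type*} [Fintype α] [DecidableEq α]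
    {U : Matrix α α ℂ} (hU : IsUnitaryM U) (A : Matrix α α ℂ) :
    frobSq (A * U) = frobSq A := by
  rw [frobSq_eq_re_trace, frobSq_eq_re_trace]
  rw [Matrix.conjTranspose_mul]
  rw [show Uᴴ * Aᴴ * (A * U) = Uᴴ * (Aᴴ * A) * U by
    rw [Matrix.mul_assoc, Matrix.mul_assoc, Matrix.mul_assoc]]
  rw [Matrix.trace_mul_cycle, ← Matrix.mul_assoc, hU.1, Matrix.one_mul]

lemma unitary_mul {α : Type*} [Fintype α] [DecidableEq α]
    {A B : Matrix α α ℂ} (hA : IsUnitaryM A) (hB : IsUnitaryM B) : IsUnitaryM (A * B) := by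
  constructor
  · rw [Matrix.conjTranspose_mul, Matrix.mul_assoc, ← Matrix.mul_assoc B, hB.1,
      Matrix.one_mul, hA.1]
  · rw [Matrix.conjTranspose_mul, Matrix.mul_assoc, ← Matrix.mul_assoc Aᴴ, hA.2,
      Matrix.one_mul, hB.2]

lemma unitary_one {α : Type*} [Fintype α] [DecidableEq α] :
    IsUnitaryM (1 : Matrix α α ℂ) := by
  constructor <;> simp

lemma unitary_list_prod {α : Type*} [Fintype α] [DecidableEq α]
    (l : List (Matrix α α ℂ)) (h : ∀ M ∈ l, IsUnitaryM M) : IsUnitaryM l.prod := by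
  induction l with
  | nil => exact unitary_one
  | cons a l ih =>
    rw [List.prod_cons]
    exact unitary_mul (h a List.mem_cons_self) (ih fun M hM => h M (List.mem_cons_of_mem a hM))

lemma czGate_eq_diagonal (S : Finset (Fin N)) :
    czGate S = Matrix.diagonal (fun x => if ∀ i ∈ S, x i = true then -1 else 1) := by
  ext x y
  by_cases h : x = y
  · subst h; simp [czGate, Matrix.diagonal_apply_eq]
  · simp [czGate, h, Matrix.diagonal_apply_ne _ h]

lemma czGate_unitary (S : Finset (Fin N)) : IsUnitaryM (czGate S) := by
  rw [czGate_eq_diagonal]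
  set d : (Fin N → Bool) → ℂ := fun x => if ∀ i ∈ S, x i = true then -1 else 1 with hdd
  have hmul : Matrix.diagonal d * Matrix.diagonal d = 1 := by
    rw [Matrix.diagonal_mul_diagonal]
    have h9 : (fun i : Fin N → Bool => d i * d i) = fun _ => (1:ℂ) := by
      funext x
      simp only [hdd]
      by_cases h : ∀ i ∈ S, x i = true
      · rw [if_pos h]; norm_num
      · rw [if_neg h]; norm_num
    rw [h9]
    exact Matrix.diagonal_one
  have hct : (Matrix.diagonal d)ᴴ = Matrix.diagonal d := by
    rw [Matrix.diagonal_conjTranspose]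
    have h9 : star d = d := by
      funext x
      simp only [hdd, Pi.star_apply]
      by_cases h : ∀ i ∈ S, x i = true
      · rw [if_pos h]; simp
      · rw [if_neg h]; simp
    rw [h9]
  exact ⟨by rw [hct, hmul], by rw [hct, hmul]⟩

lemma frobSq_czGate_sub_one (S : Finset (Fin N)) :
    frobSq (czGate S - 1) = 4 * 2 ^ (N - S.card) := by
  have hd : czGate S - 1 = Matrix.diagonal
      (fun x : Fin N → Bool => if ∀ i ∈ S, x i = true then (-2:ℂ) else 0) := by
    ext x y
    by_cases h : x = y
    · subst h
      rw [Matrix.sub_apply, czGate_eq_diagonal, Matrix.diagonal_apply_eq,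
        Matrix.diagonal_apply_eq, Matrix.one_apply_eq]
      by_cases hx : ∀ i ∈ S, x i = true
      · rw [if_pos hx, if_pos hx]; norm_num
      · rw [if_neg hx, if_neg hx]; norm_num
    · rw [Matrix.sub_apply, czGate_eq_diagonal, Matrix.diagonal_apply_ne _ h,
        Matrix.diagonal_apply_ne _ h, Matrix.one_apply_ne h, sub_zero]
  rw [hd, frobSq]
  have h1 : ∀ x : Fin N → Bool, ∑ y : Fin N → Bool,
      ‖Matrix.diagonal (fun x : Fin N → Bool =>
        if ∀ i ∈ S, x i = true then (-2:ℂ) else 0) x y‖ ^ 2 =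
      if ∀ i ∈ S, x i = true then (4:ℝ) else 0 := by
    intro x
    rw [Finset.sum_eq_single x]
    · rw [Matrix.diagonal_apply_eq]
      by_cases h : ∀ i ∈ S, x i = true
      · rw [if_pos h, if_pos h, norm_neg, Complex.norm_two]; norm_num
      · rw [if_neg h, if_neg h, norm_zero]; norm_num
    · intro y _ hy
      rw [Matrix.diagonal_apply_ne' _ hy, norm_zero]
      norm_num
    · intro h; exact absurd (Finset.mem_univ x) h
  simp_rw [h1]
  have h2 : ∀ x : Fin N → Bool, (if ∀ i ∈ S, x i = true then (4:ℝ) else 0)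
      = 4 * ∏ i : Fin N, (if i ∈ S then (if x i = true then (1:ℝ) else 0) else 1) := by
    intro x
    by_cases hx : ∀ i ∈ S, x i = true
    · rw [if_pos hx, Finset.prod_eq_one, mul_one]
      intro i _
      by_cases hi : i ∈ S
      · rw [if_pos hi, if_pos (hx i hi)]
      · rw [if_neg hi]
    · rw [if_neg hx]
      push_neg at hx
      obtain ⟨i, hiS, hxi⟩ := hx
      rw [Finset.prod_eq_zero (Finset.mem_univ i), mul_zero]
      rw [if_pos hiS, if_neg hxi]
  simp_rw [h2]
  rw [← Finset.mul_sum]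
  congr 1
  rw [← Fintype.prod_sum fun (i : Fin N) (b : Bool) =>
    (if i ∈ S then (if b = true then (1:ℝ) else 0) else 1)]
  have h3 : ∀ i : Fin N,
      (∑ b : Bool, if i ∈ S then (if b = true then (1:ℝ) else 0) else 1) =
      if i ∈ S then 1 else 2 := by
    intro i
    by_cases hi : i ∈ S <;> simp [hi] <;> norm_num
  simp_rw [h3]
  rw [Finset.prod_ite (fun _ => (1:ℝ)) (fun _ => (2:ℝ))]
  rw [Finset.prod_const, Finset.prod_const, one_pow, one_mul]
  congr 1
  rw [show Finset.filter (fun x => ¬ x ∈ S) Finset.univ = Sᶜ by ext i; simp]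
  rw [Finset.card_compl, Fintype.card_fin]

end RWCZ
namespace RWCZ
open Matrix Finset

lemma sum_snoc {k : ℕ} {M : Type*} [AddCommMonoid M] (f : (Fin (k+1) → Bool) → M) :
    ∑ w : Fin (k+1) → Bool, f w = ∑ b : Bool, ∑ x : Fin k → Bool, f (Fin.snoc x b) := by
  rw [← Equiv.sum_comp (Fin.snocEquiv (fun _ => Bool)) f, Fintype.sum_prod_type]
  rfl

lemma snoc_eq_iff {k : ℕ} (z z' : Fin k → Bool) (c : Bool) :
    Fin.snoc z c = (Fin.snoc z' c : Fin (k+1) → Bool) ↔ z = z' := by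
  constructor
  · intro h
    funext i
    have := congrFun h i.castSucc
    simpa [Fin.snoc_castSucc] using this
  · intro h; rw [h]

/-- generic Gram collapse computation -/
lemma sum_sq_abs_collapse {ι κ β : Type*} [Fintype ι] [Fintype κ] [DecidableEq κ] [Fintype β]
    (f : κ → ι → ℂ) (g : κ → β → ℂ)
    (hg : ∀ z z', (∑ t, (starRingEnd ℂ) (g z t) * g z' t) = if z = z' then 2 else 0) :
    ∑ s : ι, ∑ t : β, ‖∑ z, f z s * (starRingEnd ℂ) (g z t)‖ ^ 2
      = 2 * ∑ s : ι, ∑ z : κ, ‖f z s‖ ^ 2 := by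
  have key : ∀ s, ∑ t, (‖∑ z, f z s * (starRingEnd ℂ) (g z t)‖ ^ 2 : ℝ) =
      2 * ∑ z, ‖f z s‖ ^ 2 := by
    intro s
    have c1 : ∀ t, (‖∑ z, f z s * (starRingEnd ℂ) (g z t)‖ ^ 2 : ℝ) =
        (∑ z, ∑ z', (f z s * (starRingEnd ℂ) (g z t)) *
          (starRingEnd ℂ) (f z' s * (starRingEnd ℂ) (g z' t))).re := by
      intro t
      have e1 : (∑ z, f z s * (starRingEnd ℂ) (g z t)) *
          (starRingEnd ℂ) (∑ z', f z' s * (starRingEnd ℂ) (g z' t)) =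
          ∑ z, ∑ z', (f z s * (starRingEnd ℂ) (g z t)) *
            (starRingEnd ℂ) (f z' s * (starRingEnd ℂ) (g z' t)) := by
        rw [map_sum, Finset.sum_mul_sum]
      rw [← e1, Complex.mul_conj, Complex.ofReal_re, Complex.sq_norm]
    simp_rw [c1]
    rw [← Complex.re_sum]
    have c2 : (∑ t, ∑ z, ∑ z', (f z s * (starRingEnd ℂ) (g z t)) *
          (starRingEnd ℂ) (f z' s * (starRingEnd ℂ) (g z' t)))
        = ∑ z, ∑ z', (f z s * (starRingEnd ℂ) (f z' s)) *
            ∑ t, (starRingEnd ℂ) (g z t) * g z' t := by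
      rw [Finset.sum_comm]
      refine Finset.sum_congr rfl fun z _ => ?_
      rw [Finset.sum_comm]
      refine Finset.sum_congr rfl fun z' _ => ?_
      rw [Finset.mul_sum]
      refine Finset.sum_congr rfl fun t _ => ?_
      rw [_root_.map_mul, Complex.conj_conj]
      ring
    rw [c2]
    have c3 : (∑ z, ∑ z', (f z s * (starRingEnd ℂ) (f z' s)) *
            ∑ t, (starRingEnd ℂ) (g z t) * g z' t)
        = 2 * ∑ z, f z s * (starRingEnd ℂ) (f z s) := by
      simp_rw [hg]
      rw [Finset.mul_sum]
      refine Finset.sum_congr rfl fun z _ => ?_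
      rw [Finset.sum_eq_single z]
      · rw [if_pos rfl]; ring
      · intro z' _ hz'; rw [if_neg (Ne.symm hz'), mul_zero]
      · intro h; exact absurd (Finset.mem_univ z) h
    rw [c3]
    simp_rw [Complex.mul_conj]
    rw [← Complex.ofReal_sum]
    rw [show ((2:ℂ) * ((∑ z, Complex.normSq (f z s) : ℝ) : ℂ)) =
      (((2 * ∑ z, Complex.normSq (f z s) : ℝ)) : ℂ) by push_cast; ring]
    rw [Complex.ofReal_re]
    simp [Complex.sq_norm]
  simp_rw [key]
  rw [← Finset.mul_sum]

end RWCZ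
namespace RWCZ
open Matrix Finset

variable {ν : ℕ}

def Psi (A B : Matrix (Fin (ν+1) → Bool) (Fin (ν+1) → Bool) ℂ) :
    Matrix (Fin (ν+1+1) → Bool) (Fin (ν+1+1) → Bool) ℂ :=
  Matrix.of fun w w' =>
    ∑ z : Fin ν → Bool,
      A (Fin.snoc z (w (Fin.last (ν+1)))) (fun i => w i.castSucc) *
        (starRingEnd ℂ) (B (Fin.snoc z (w' (Fin.last (ν+1)))) (fun i => w' i.castSucc))

lemma chanLast_succ (M : Matrix (Fin (ν+1) → Bool) (Fin (ν+1) → Bool) ℂ) :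
    chanLast M = Matrix.of fun b b' =>
      ∑ z : Fin ν → Bool, M (Fin.snoc z b) (Fin.snoc z b') := rfl

lemma mul_std_mul {α : Type*} [Fintype α] [DecidableEq α] (A B : Matrix α α ℂ)
    (x x' u v : α) :
    (A * Matrix.single x x' (1 : ℂ) * Bᴴ) u v = A u x * (starRingEnd ℂ) (B v x') := by
  rw [Matrix.mul_apply]
  have h1 : ∀ t, (A * Matrix.single x x' (1:ℂ)) u t = if x' = t then A u x else 0 := by
    intro t
    rw [Matrix.mul_apply]
    by_cases h : x' = t
    · subst h
      rw [Finset.sum_eq_single x]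
      · simp [Matrix.single]
      · intro s _ hs; simp [Matrix.single, Ne.symm hs]
      · intro h; exact absurd (Finset.mem_univ x) h
    · rw [if_neg h]
      apply Finset.sum_eq_zero
      intro s _
      simp [Matrix.single, h]
  simp_rw [h1]
  rw [Finset.sum_eq_single x']
  · rw [if_pos rfl, Matrix.conjTranspose_apply]; rfl
  · intro t _ ht; rw [if_neg (Ne.symm ht), zero_mul]
  · intro h; exact absurd (Finset.mem_univ x') h

lemma choiU_eq_Psi (C : Matrix (Fin (ν+1) → Bool) (Fin (ν+1) → Bool) ℂ) :
    choiU C = Psi C C := by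
  ext w w'
  simp only [choiU, choiOfChannel, chanU, chanLast_succ, Matrix.of_apply, Psi]
  refine Finset.sum_congr rfl fun z _ => ?_
  rw [mul_std_mul]

lemma choiU_sub_eq (C D : Matrix (Fin (ν+1) → Bool) (Fin (ν+1) → Bool) ℂ) :
    choiU C - choiU D = Psi (C - D) C + Psi D (C - D) := by
  rw [choiU_eq_Psi, choiU_eq_Psi]
  ext w w'
  simp only [Matrix.sub_apply, Matrix.add_apply]
  simp only [Psi, Matrix.of_apply]
  rw [← Finset.sum_sub_distrib, ← Finset.sum_add_distrib]
  refine Finset.sum_congr rfl fun z _ => ?_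
  simp only [Matrix.sub_apply, map_sub]
  ring

lemma sum_abs_sq_proj (M : Matrix (Fin (ν+1) → Bool) (Fin (ν+1) → Bool) ℂ) :
    (∑ w : Fin (ν+1+1) → Bool, ∑ z : Fin ν → Bool,
      ‖M (Fin.snoc z (w (Fin.last (ν+1)))) (fun i => w i.castSucc)‖ ^ 2)
    = frobSq M := by
  rw [sum_snoc (k := ν+1)]
  have h2 : ∀ c : Bool, ∀ x : Fin (ν+1) → Bool, ∀ z : Fin ν → Bool,
      ‖M (Fin.snoc z ((Fin.snoc x c : Fin (ν+2) → Bool) (Fin.last (ν+1))))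
        (fun i => (Fin.snoc x c : Fin (ν+2) → Bool) i.castSucc)‖ ^ 2
      = ‖M (Fin.snoc z c) x‖ ^ 2 := by
    intro c x z
    simp [Fin.snoc_last, Fin.snoc_castSucc]
  calc (∑ c : Bool, ∑ x : Fin (ν+1) → Bool, ∑ z : Fin ν → Bool,
        ‖M (Fin.snoc z ((Fin.snoc x c : Fin (ν+2) → Bool) (Fin.last (ν+1))))
          (fun i => (Fin.snoc x c : Fin (ν+2) → Bool) i.castSucc)‖ ^ 2)
      = ∑ c : Bool, ∑ x : Fin (ν+1) → Bool, ∑ z : Fin ν → Bool,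
          ‖M (Fin.snoc z c) x‖ ^ 2 := by
        refine Finset.sum_congr rfl fun c _ => Finset.sum_congr rfl fun x _ =>
          Finset.sum_congr rfl fun z _ => h2 c x z
    _ = ∑ x : Fin (ν+1) → Bool, ∑ c : Bool, ∑ z : Fin ν → Bool,
          ‖M (Fin.snoc z c) x‖ ^ 2 := Finset.sum_comm
    _ = ∑ x : Fin (ν+1) → Bool, ∑ u : Fin (ν+1) → Bool, ‖M u x‖ ^ 2 := by
        refine Finset.sum_congr rfl fun x _ => ?_
        rw [sum_snoc (k := ν) (f := fun u => ‖M u x‖ ^ 2)]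
    _ = frobSq M := by rw [frobSq, Finset.sum_comm]

lemma frobSq_Psi_right (A B : Matrix (Fin (ν+1) → Bool) (Fin (ν+1) → Bool) ℂ)
    (hB : B * Bᴴ = 1) : frobSq (Psi A B) = 2 * frobSq A := by
  have collapse : ∀ (c : Bool) (z z' : Fin ν → Bool),
      (∑ x' : Fin (ν+1) → Bool,
        (starRingEnd ℂ) (B (Fin.snoc z c) x') * B (Fin.snoc z' c) x') =
      if z = z' then 1 else 0 := by
    intro c z z'
    have h1 : (B * Bᴴ) (Fin.snoc z' c) (Fin.snoc z c) =
        (1 : Matrix (Fin (ν+1) → Bool) (Fin (ν+1) → Bool) ℂ)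
          (Fin.snoc z' c) (Fin.snoc z c) := by rw [hB]
    rw [Matrix.mul_apply] at h1
    simp only [Matrix.conjTranspose_apply] at h1
    rw [Matrix.one_apply] at h1
    calc (∑ x' : Fin (ν+1) → Bool,
          (starRingEnd ℂ) (B (Fin.snoc z c) x') * B (Fin.snoc z' c) x')
        = ∑ x' : Fin (ν+1) → Bool, B (Fin.snoc z' c) x' * star (B (Fin.snoc z c) x') := by
          refine Finset.sum_congr rfl fun x' _ => ?_
          rw [mul_comm]; rfl
      _ = if Fin.snoc z' c = (Fin.snoc z c : Fin (ν+1) → Bool) then 1 else 0 := h1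
      _ = if z = z' then 1 else 0 := by
          by_cases h : z = z'
          · subst h; rw [if_pos rfl, if_pos rfl]
          · rw [if_neg (fun hc => h ((snoc_eq_iff _ _ _).1 hc).symm), if_neg h]
  have hg : ∀ z z' : Fin ν → Bool,
      (∑ w' : Fin (ν+1+1) → Bool,
        (starRingEnd ℂ) (B (Fin.snoc z (w' (Fin.last (ν+1)))) (fun i => w' i.castSucc)) *
          B (Fin.snoc z' (w' (Fin.last (ν+1)))) (fun i => w' i.castSucc)) =
      if z = z' then 2 else 0 := by
    intro z z'
    rw [sum_snoc (k := ν+1)]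
    have : ∀ c : Bool, ∀ x' : Fin (ν+1) → Bool,
        (starRingEnd ℂ) (B (Fin.snoc z ((Fin.snoc x' c : Fin (ν+2) → Bool) (Fin.last (ν+1))))
          (fun i => (Fin.snoc x' c : Fin (ν+2) → Bool) i.castSucc)) *
          B (Fin.snoc z' ((Fin.snoc x' c : Fin (ν+2) → Bool) (Fin.last (ν+1))))
            (fun i => (Fin.snoc x' c : Fin (ν+2) → Bool) i.castSucc)
        = (starRingEnd ℂ) (B (Fin.snoc z c) x') * B (Fin.snoc z' c) x' := by
      intro c x'
      simp [Fin.snoc_last, Fin.snoc_castSucc]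
    simp_rw [this, collapse]
    by_cases h : z = z' <;> simp [h] <;> norm_num
  have main := sum_sq_abs_collapse
    (fun z (w : Fin (ν+1+1) → Bool) =>
      A (Fin.snoc z (w (Fin.last (ν+1)))) (fun i => w i.castSucc))
    (fun z (w' : Fin (ν+1+1) → Bool) =>
      B (Fin.snoc z (w' (Fin.last (ν+1)))) (fun i => w' i.castSucc)) hg
  rw [frobSq]
  simp only [Psi, Matrix.of_apply]
  rw [main]
  congr 1
  exact sum_abs_sq_proj A

lemma frobSq_Psi_left (A B : Matrix (Fin (ν+1) → Bool) (Fin (ν+1) → Bool) ℂ)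
    (hA : A * Aᴴ = 1) : frobSq (Psi A B) = 2 * frobSq B := by
  have collapse : ∀ (c : Bool) (z z' : Fin ν → Bool),
      (∑ x' : Fin (ν+1) → Bool,
        (starRingEnd ℂ) (A (Fin.snoc z c) x') * A (Fin.snoc z' c) x') =
      if z = z' then 1 else 0 := by
    intro c z z'
    have h1 : (A * Aᴴ) (Fin.snoc z' c) (Fin.snoc z c) =
        (1 : Matrix (Fin (ν+1) → Bool) (Fin (ν+1) → Bool) ℂ)
          (Fin.snoc z' c) (Fin.snoc z c) := by rw [hA]
    rw [Matrix.mul_apply] at h1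
    simp only [Matrix.conjTranspose_apply] at h1
    rw [Matrix.one_apply] at h1
    calc (∑ x' : Fin (ν+1) → Bool,
          (starRingEnd ℂ) (A (Fin.snoc z c) x') * A (Fin.snoc z' c) x')
        = ∑ x' : Fin (ν+1) → Bool, A (Fin.snoc z' c) x' * star (A (Fin.snoc z c) x') := by
          refine Finset.sum_congr rfl fun x' _ => ?_
          rw [mul_comm]; rfl
      _ = if Fin.snoc z' c = (Fin.snoc z c : Fin (ν+1) → Bool) then 1 else 0 := h1
      _ = if z = z' then 1 else 0 := by
          by_cases h : z = z'
          · subst h; rw [if_pos rfl, if_pos rfl]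
          · rw [if_neg (fun hc => h ((snoc_eq_iff _ _ _).1 hc).symm), if_neg h]
  have hg : ∀ z z' : Fin ν → Bool,
      (∑ w : Fin (ν+1+1) → Bool,
        (starRingEnd ℂ) (A (Fin.snoc z (w (Fin.last (ν+1)))) (fun i => w i.castSucc)) *
          A (Fin.snoc z' (w (Fin.last (ν+1)))) (fun i => w i.castSucc)) =
      if z = z' then 2 else 0 := by
    intro z z'
    rw [sum_snoc (k := ν+1)]
    have hsimp : ∀ c : Bool, ∀ x' : Fin (ν+1) → Bool,
        (starRingEnd ℂ) (A (Fin.snoc z ((Fin.snoc x' c : Fin (ν+2) → Bool) (Fin.last (ν+1))))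
          (fun i => (Fin.snoc x' c : Fin (ν+2) → Bool) i.castSucc)) *
          A (Fin.snoc z' ((Fin.snoc x' c : Fin (ν+2) → Bool) (Fin.last (ν+1))))
            (fun i => (Fin.snoc x' c : Fin (ν+2) → Bool) i.castSucc)
        = (starRingEnd ℂ) (A (Fin.snoc z c) x') * A (Fin.snoc z' c) x' := by
      intro c x'
      simp [Fin.snoc_last, Fin.snoc_castSucc]
    simp_rw [hsimp, collapse]
    by_cases h : z = z' <;> simp [h] <;> norm_num
  have habs : ∀ w w' : Fin (ν+1+1) → Bool,
      ‖∑ z : Fin ν → Bool,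
        A (Fin.snoc z (w (Fin.last (ν+1)))) (fun i => w i.castSucc) *
          (starRingEnd ℂ) (B (Fin.snoc z (w' (Fin.last (ν+1)))) (fun i => w' i.castSucc))‖
      = ‖∑ z : Fin ν → Bool,
        B (Fin.snoc z (w' (Fin.last (ν+1)))) (fun i => w' i.castSucc) *
          (starRingEnd ℂ) (A (Fin.snoc z (w (Fin.last (ν+1)))) (fun i => w i.castSucc))‖ := by
    intro w w'
    rw [← Complex.norm_conj, map_sum]
    congr 1
    refine Finset.sum_congr rfl fun z _ => ?_
    rw [_root_.map_mul, Complex.conj_conj]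
    ring
  have main := sum_sq_abs_collapse
    (fun z (w' : Fin (ν+1+1) → Bool) =>
      B (Fin.snoc z (w' (Fin.last (ν+1)))) (fun i => w' i.castSucc))
    (fun z (w : Fin (ν+1+1) → Bool) =>
      A (Fin.snoc z (w (Fin.last (ν+1)))) (fun i => w i.castSucc)) hg
  rw [frobSq]
  simp only [Psi, Matrix.of_apply]
  calc (∑ w : Fin (ν+1+1) → Bool, ∑ w' : Fin (ν+1+1) → Bool,
        ‖∑ z : Fin ν → Bool,
          A (Fin.snoc z (w (Fin.last (ν+1)))) (fun i => w i.castSucc) *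
            (starRingEnd ℂ) (B (Fin.snoc z (w' (Fin.last (ν+1)))) (fun i => w' i.castSucc))‖ ^ 2)
      = ∑ w' : Fin (ν+1+1) → Bool, ∑ w : Fin (ν+1+1) → Bool,
        ‖∑ z : Fin ν → Bool,
          B (Fin.snoc z (w' (Fin.last (ν+1)))) (fun i => w' i.castSucc) *
            (starRingEnd ℂ) (A (Fin.snoc z (w (Fin.last (ν+1)))) (fun i => w i.castSucc))‖ ^ 2 := by
        rw [Finset.sum_comm]
        refine Finset.sum_congr rfl fun w' _ => Finset.sum_congr rfl fun w _ => ?_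
        rw [habs w w']
    _ = 2 * ∑ w' : Fin (ν+1+1) → Bool, ∑ z : Fin ν → Bool,
        ‖B (Fin.snoc z (w' (Fin.last (ν+1)))) (fun i => w' i.castSucc)‖ ^ 2 := main
    _ = 2 * frobSq B := by rw [sum_abs_sq_proj B]

end RWCZ
namespace RWCZ
open Matrix Finset

lemma gk_add {N : ℕ} (k : ℕ) (A B : Matrix (Fin N → Bool) (Fin N → Bool) ℂ) :
    gk k (A + B) = gk k A + gk k B := by
  ext p
  have : pauliCoeff (A + B) p = pauliCoeff A p + pauliCoeff B p := by
    simp [pauliCoeff, Matrix.mul_add, mul_add]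
  by_cases h : k < pauliDeg p <;>
    simp [gk, h, this, PiLp.add_apply]

lemma sq_le_sq_of_nonneg {a b : ℝ} (ha : 0 ≤ a) (hb : 0 ≤ b) (h : a ^ 2 ≤ b ^ 2) : a ≤ b := by
  nlinarith

lemma one_step {ν : ℕ} (k ℓ : ℕ)
    (W1 W2 : Matrix (Fin (ν+1) → Bool) (Fin (ν+1) → Bool) ℂ)
    (h1 : IsUnitaryM W1) (h2 : IsUnitaryM W2)
    (S : Finset (Fin (ν+1))) (hS : ℓ ≤ S.card) :
    ‖gk k (choiU (W1 * czGate S * W2))‖ ≤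
      ‖gk k (choiU (W1 * W2))‖ + 8 * Real.sqrt 2 * (2:ℝ) ^ (-(ℓ:ℝ)/2) := by
  set C := W1 * czGate S * W2 with hCdef
  set D := W1 * W2 with hDdef
  have hC : IsUnitaryM C := unitary_mul (unitary_mul h1 (czGate_unitary S)) h2
  have hD : IsUnitaryM D := unitary_mul h1 h2
  have hdiff : C - D = W1 * ((czGate S - 1) * W2) := by
    rw [hCdef, hDdef]; noncomm_ring
  have hfrob : frobSq (C - D) = 4 * 2 ^ ((ν+1) - S.card) := by
    rw [hdiff, frobSq_unitary_left h1, frobSq_unitary_right h2, frobSq_czGate_sub_one]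
  have hcard : S.card ≤ ν + 1 := by
    simpa using Finset.card_le_univ S
  have hnum : ∀ X : Matrix (Fin (ν+1+1) → Bool) (Fin (ν+1+1) → Bool) ℂ,
      frobSq X = 2 * frobSq (C - D) → ‖gk k X‖ ≤ 2 * (2:ℝ) ^ (-(ℓ:ℝ)/2) := by
    intro X hX
    have h := gk_norm_le k X
    rw [hX, hfrob] at h
    have hb : ((2:ℝ)^(ν+1+1))⁻¹ * (2 * (4 * 2 ^ ((ν+1) - S.card))) ≤
        (2 * (2:ℝ) ^ (-(ℓ:ℝ)/2)) ^ 2 := by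
      have e1 : ((2:ℝ)) ^ ((ν+1) - S.card) = 2 ^ (ν+1) / 2 ^ S.card := by
        rw [pow_sub₀ (2:ℝ) (by norm_num) hcard, div_eq_mul_inv]
      have e2 : ((2:ℝ) ^ (-(ℓ:ℝ)/2)) ^ 2 = (2:ℝ) ^ (-(ℓ:ℝ)) := by
        rw [← Real.rpow_natCast ((2:ℝ) ^ (-(ℓ:ℝ)/2)) 2, ← Real.rpow_mul (by norm_num)]
        norm_num
      have e3 : (2:ℝ) ^ (-(ℓ:ℝ)) = ((2:ℝ) ^ (ℓ:ℕ))⁻¹ := by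
        rw [Real.rpow_neg (by norm_num), Real.rpow_natCast]
      have e4 : ((2:ℝ) ^ S.card)⁻¹ ≤ ((2:ℝ) ^ (ℓ:ℕ))⁻¹ := by
        apply inv_anti₀
        · positivity
        · exact pow_le_pow_right₀ (by norm_num) hS
      rw [mul_pow, e2, e3, e1]
      have hpos : (0:ℝ) < 2 ^ (ν+1) := by positivity
      rw [show ((2:ℝ)^(ν+1+1))⁻¹ * (2 * (4 * (2 ^ (ν+1) / 2 ^ S.card))) =
          4 * ((2:ℝ) ^ S.card)⁻¹ by
        rw [pow_succ]
        field_simp]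
      calc 4 * ((2:ℝ) ^ S.card)⁻¹ ≤ 4 * ((2:ℝ) ^ (ℓ:ℕ))⁻¹ := by
            apply mul_le_mul_of_nonneg_left e4 (by norm_num)
        _ = 2 ^ 2 * ((2:ℝ) ^ (ℓ:ℕ))⁻¹ := by norm_num
    refine sq_le_sq_of_nonneg (norm_nonneg _) (by positivity) (le_trans h hb)
  have hsub := choiU_sub_eq C D
  have e2 : gk k (choiU C) - gk k (choiU D) =
      gk k (Psi (C - D) C) + gk k (Psi D (C - D)) := by
    rw [← gk_sub, hsub, gk_add]
  have tri : ‖gk k (choiU C)‖ ≤ ‖gk k (choiU D)‖ +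
      (‖gk k (Psi (C - D) C)‖ + ‖gk k (Psi D (C - D))‖) := by
    have e3 : gk k (choiU C) = gk k (choiU D) +
        (gk k (Psi (C - D) C) + gk k (Psi D (C - D))) := by
      rw [← e2]; abel
    rw [e3]
    calc ‖gk k (choiU D) + (gk k (Psi (C - D) C) + gk k (Psi D (C - D)))‖
        ≤ ‖gk k (choiU D)‖ + ‖gk k (Psi (C - D) C) + gk k (Psi D (C - D))‖ :=
          norm_add_le _ _
      _ ≤ ‖gk k (choiU D)‖ + (‖gk k (Psi (C - D) C)‖ + ‖gk k (Psi D (C - D))‖) := by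
          gcongr
          exact norm_add_le _ _
  have b1 : ‖gk k (Psi (C - D) C)‖ ≤ 2 * (2:ℝ) ^ (-(ℓ:ℝ)/2) :=
    hnum _ (frobSq_Psi_right (C - D) C hC.1)
  have b2 : ‖gk k (Psi D (C - D))‖ ≤ 2 * (2:ℝ) ^ (-(ℓ:ℝ)/2) :=
    hnum _ (frobSq_Psi_left D (C - D) hD.1)
  have hfinal : (2 * (2:ℝ) ^ (-(ℓ:ℝ)/2)) + 2 * (2:ℝ) ^ (-(ℓ:ℝ)/2) ≤
      8 * Real.sqrt 2 * (2:ℝ) ^ (-(ℓ:ℝ)/2) := by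
    have hs : (1:ℝ) ≤ Real.sqrt 2 := by
      nlinarith [Real.sq_sqrt (by norm_num : (0:ℝ) ≤ 2), Real.sqrt_nonneg 2]
    have hr : (0:ℝ) ≤ (2:ℝ) ^ (-(ℓ:ℝ)/2) := by positivity
    nlinarith
  linarith [tri, b1, b2]

theorem main_aux (n ℓ : ℕ) (m : ℕ) :
    ∀ (V : Fin (m+1) → Matrix (Fin n → Bool) (Fin n → Bool) ℂ),
      (∀ i, IsUnitaryM (V i)) →
    ∀ (S : Fin m → Finset (Fin n)), (∀ j, (S j).Nonempty) → (∀ j, ℓ ≤ (S j).card) →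
    ∀ k : ℕ,
    ‖gk k (choiU (V 0 * (List.ofFn fun j : Fin m => czGate (S j) * V j.succ).prod))‖ ≤
      ‖gk k (choiU (V 0 * (List.ofFn fun j : Fin m => V j.succ).prod))‖ +
        8 * Real.sqrt 2 * (m : ℝ) * (2:ℝ) ^ (-(ℓ:ℝ)/2) := by
  induction m with
  | zero =>
    intro V hV S hSne hScard k
    simp
  | succ M ih =>
    intro V hV S hSne hScard k
    obtain ⟨i0, -⟩ := hSne 0
    cases n with
    | zero => exact i0.elim0
    | succ ν =>
      set R := (List.ofFn fun j : Fin M => czGate (S j.succ) * V j.succ.succ).prod with hRdef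
      have hR : IsUnitaryM R := by
        apply unitary_list_prod
        intro M' hM'
        rw [List.mem_ofFn] at hM'
        obtain ⟨j, rfl⟩ := hM'
        exact unitary_mul (czGate_unitary _) (hV _)
      have hlist1 : (List.ofFn fun j : Fin (M+1) => czGate (S j) * V j.succ).prod =
          (czGate (S 0) * V 1) * R := by
        rw [List.ofFn_succ, List.prod_cons, hRdef]
        rfl
      have hlist2 : (List.ofFn fun j : Fin (M+1) => V j.succ).prod =
          V 1 * (List.ofFn fun j : Fin M => V j.succ.succ).prod := by
        rw [List.ofFn_succ, List.prod_cons]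
        rfl
      have step := one_step k ℓ (V 0) (V 1 * R) (hV 0)
        (unitary_mul (hV 1) hR) (S 0) (hScard 0)
      have eC : V 0 * (List.ofFn fun j : Fin (M+1) => czGate (S j) * V j.succ).prod =
          V 0 * czGate (S 0) * (V 1 * R) := by
        rw [hlist1]; noncomm_ring
      -- IH circuit
      set V' : Fin (M+1) → Matrix (Fin (ν+1) → Bool) (Fin (ν+1) → Bool) ℂ :=
        Fin.cons (V 0 * V 1) (fun j => V j.succ.succ) with hV'def
      have hV' : ∀ i, IsUnitaryM (V' i) := by
        intro i
        refine Fin.cases ?_ ?_ i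
        · rw [hV'def]; rw [Fin.cons_zero]; exact unitary_mul (hV 0) (hV 1)
        · intro j; rw [hV'def]; rw [Fin.cons_succ]; exact hV _
      have ihh := ih V' hV' (fun j => S j.succ) (fun j => hSne j.succ)
        (fun j => hScard j.succ) k
      have eIH1 : V' 0 * (List.ofFn fun j : Fin M => czGate (S j.succ) * V' j.succ).prod =
          V 0 * (V 1 * R) := by
        have : (fun j : Fin M => czGate (S j.succ) * V' j.succ) =
            (fun j : Fin M => czGate (S j.succ) * V j.succ.succ) := by
          funext j; rw [hV'def, Fin.cons_succ]
        rw [this, ← hRdef, hV'def, Fin.cons_zero]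
        noncomm_ring
      have eIH2 : V' 0 * (List.ofFn fun j : Fin M => V' j.succ).prod =
          V 0 * (List.ofFn fun j : Fin (M+1) => V j.succ).prod := by
        have : (fun j : Fin M => V' j.succ) = (fun j : Fin M => V j.succ.succ) := by
          funext j; rw [hV'def, Fin.cons_succ]
        rw [this, hlist2, hV'def, Fin.cons_zero]
        noncomm_ring
      rw [eIH1, eIH2] at ihh
      rw [eC]
      have hfin : 8 * Real.sqrt 2 * ((M:ℝ)) * (2:ℝ) ^ (-(ℓ:ℝ)/2) +
          8 * Real.sqrt 2 * (2:ℝ) ^ (-(ℓ:ℝ)/2) =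
          8 * Real.sqrt 2 * ((M:ℝ) + 1) * (2:ℝ) ^ (-(ℓ:ℝ)/2) := by ring
      push_cast
      linarith [step, ihh]

end RWCZ
/-- Removing the wide CZ gates: Pauli weight above any degree `k`. -/
theorem removing_wide_cz_weight (n ℓ m : ℕ) (hℓ : 1 ≤ ℓ)
    (V : Fin (m + 1) → Matrix (Fin n → Bool) (Fin n → Bool) ℂ)
    (hV : ∀ i, IsUnitaryM (V i))
    (S : Fin m → Finset (Fin n))
    (hSne : ∀ j, (S j).Nonempty) (hScard : ∀ j, ℓ ≤ (S j).card)
    (k : ℕ) :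
    weightAbove k (choiU (V 0 * (List.ofFn fun j : Fin m => czGate (S j) * V j.succ).prod)) ≤
      (Real.sqrt
          (weightAbove k (choiU (V 0 * (List.ofFn fun j : Fin m => V j.succ).prod))) +
        8 * Real.sqrt 2 * (m : ℝ) * (2 : ℝ) ^ (-(ℓ : ℝ) / 2)) ^ 2 := by
  have h := RWCZ.main_aux n ℓ m V hV S hSne hScard k
  rw [← RWCZ.gk_norm_sq k
    (choiU (V 0 * (List.ofFn fun j : Fin m => czGate (S j) * V j.succ).prod))]
  rw [show Real.sqrt
      (weightAbove k (choiU (V 0 * (List.ofFn fun j : Fin m => V j.succ).prod))) =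
      ‖RWCZ.gk k (choiU (V 0 * (List.ofFn fun j : Fin m => V j.succ).prod))‖ by
    rw [← RWCZ.gk_norm_sq, Real.sqrt_sq (norm_nonneg _)]]
  exact pow_le_pow_left₀ (norm_nonneg _) h 2
end
end

section
/- Let ℓ ≥ 1, let V_0, …, V_m be n-qubit unitaries and let S_1, …, S_m be nonempty subsets of the n qubits, each of size at least ℓ. Set C = V_0 · CZ_{S_1} · V_1 · CZ_{S_2} ⋯ CZ_{S_m} · V_m and C̃ = V_0 · V_1 ⋯ V_m. Then 2^{-n} · ‖C − C̃‖_F² ≤ 4 · m² · 2^{-ℓ}. -/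
open scoped BigOperators ComplexOrder

noncomputable section

set_option linter.unusedSectionVars false

attribute [local instance] Matrix.frobeniusNormedAddCommGroup

open Matrix

section Aux

variable {α : Type*} [Fintype α] [DecidableEq α]

lemma frobSq_eq (A : Matrix α α ℂ) : frobSq A = ‖A‖ ^ 2 := by
  have hs : (0:ℝ) ≤ ∑ i, ∑ j, ‖A i j‖ ^ (2:ℝ) := by positivity
  rw [Matrix.frobenius_norm_def, ← Real.rpow_natCast _ 2, ← Real.rpow_mul hs]
  norm_num
  rfl

lemma frobSq_trace (A : Matrix α α ℂ) : frobSq A = (Matrix.trace (Aᴴ * A)).re := by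
  have : Matrix.trace (Aᴴ * A) = ∑ x, ∑ y, (Complex.normSq (A y x) : ℂ) := by
    simp [Matrix.trace, Matrix.mul_apply, Matrix.conjTranspose_apply, Matrix.diag,
      Complex.normSq_eq_conj_mul_self]
  rw [this]
  unfold frobSq
  rw [Finset.sum_comm]
  simp [Complex.sq_norm]

lemma frobSq_unit_left {U A : Matrix α α ℂ} (hU : IsUnitaryM U) :
    frobSq (U * A) = frobSq A := by
  rw [frobSq_trace, frobSq_trace]
  congr 1
  rw [Matrix.conjTranspose_mul, Matrix.mul_assoc, ← Matrix.mul_assoc Uᴴ U A, hU.2,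
    Matrix.one_mul]

lemma frobSq_unit_right {U A : Matrix α α ℂ} (hU : IsUnitaryM U) :
    frobSq (A * U) = frobSq A := by
  rw [frobSq_trace, frobSq_trace]
  congr 1
  rw [Matrix.conjTranspose_mul, Matrix.mul_assoc, Matrix.trace_mul_comm,
    Matrix.mul_assoc, Matrix.mul_assoc, hU.1, Matrix.mul_one, Matrix.trace_mul_comm]

lemma norm_unit_left {U : Matrix α α ℂ} (A : Matrix α α ℂ) (hU : IsUnitaryM U) :
    ‖U * A‖ = ‖A‖ := by
  have h2 : ‖U * A‖ ^ 2 = ‖A‖ ^ 2 := by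
    rw [← frobSq_eq, ← frobSq_eq, frobSq_unit_left hU]
  rw [← Real.sqrt_sq (norm_nonneg (U * A)), h2, Real.sqrt_sq (norm_nonneg A)]

lemma norm_unit_right {U : Matrix α α ℂ} (A : Matrix α α ℂ) (hU : IsUnitaryM U) :
    ‖A * U‖ = ‖A‖ := by
  have h2 : ‖A * U‖ ^ 2 = ‖A‖ ^ 2 := by
    rw [← frobSq_eq, ← frobSq_eq, frobSq_unit_right hU]
  rw [← Real.sqrt_sq (norm_nonneg (A * U)), h2, Real.sqrt_sq (norm_nonneg A)]

lemma isUnitary_mul {A B : Matrix α α ℂ} (hA : IsUnitaryM A) (hB : IsUnitaryM B) :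
    IsUnitaryM (A * B) := by
  constructor
  · rw [Matrix.conjTranspose_mul, Matrix.mul_assoc, ← Matrix.mul_assoc B, hB.1,
      Matrix.one_mul, hA.1]
  · rw [Matrix.conjTranspose_mul, Matrix.mul_assoc, ← Matrix.mul_assoc Aᴴ, hA.2,
      Matrix.one_mul, hB.2]

lemma isUnitary_listProd : ∀ (l : List (Matrix α α ℂ)),
    (∀ A ∈ l, IsUnitaryM A) → IsUnitaryM l.prod
  | [], _ => by constructor <;> simp [IsUnitaryM]
  | (A :: l), h => by
      rw [List.prod_cons]
      exact isUnitary_mul (h A (by simp)) (isUnitary_listProd l fun B hB => h B (by simp [hB]))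

lemma czGate_eq_diag {n : ℕ} (S : Finset (Fin n)) :
    czGate S = Matrix.diagonal fun x => if ∀ i ∈ S, x i = true then (-1 : ℂ) else 1 := by
  ext x y
  simp [czGate, Matrix.diagonal_apply]

lemma isUnitary_czGate {n : ℕ} (S : Finset (Fin n)) : IsUnitaryM (czGate S) := by
  rw [czGate_eq_diag]
  have hct : (Matrix.diagonal fun x : Fin n → Bool =>
      if ∀ i ∈ S, x i = true then (-1 : ℂ) else 1)ᴴ =
      Matrix.diagonal fun x => if ∀ i ∈ S, x i = true then (-1 : ℂ) else 1 := by
    ext x y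
    simp only [Matrix.conjTranspose_apply, Matrix.diagonal_apply]
    by_cases h : x = y
    · subst h
      simp only [if_pos rfl]
      split_ifs <;> simp
    · simp [h, Ne.symm h]
  have hsq : (Matrix.diagonal fun x : Fin n → Bool =>
      if ∀ i ∈ S, x i = true then (-1 : ℂ) else 1) *
      (Matrix.diagonal fun x => if ∀ i ∈ S, x i = true then (-1 : ℂ) else 1) = 1 := by
    rw [Matrix.diagonal_mul_diagonal]
    convert Matrix.diagonal_one
    split_ifs <;> norm_num
  exact ⟨by rw [hct, hsq], by rw [hct, hsq]⟩

lemma card_allTrue {n : ℕ} (S : Finset (Fin n)) :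
    (Finset.univ.filter fun x : Fin n → Bool => ∀ i ∈ S, x i = true).card
      ≤ 2 ^ (n - S.card) := by
  have hcard : Fintype.card ({i : Fin n // i ∉ S} → Bool) = 2 ^ (n - S.card) := by
    rw [Fintype.card_fun, Fintype.card_bool]
    congr 1
    have := Fintype.card_subtype_compl (fun i : Fin n => i ∈ S)
    simp only [Fintype.card_fin, Fintype.card_coe] at this ⊢
    exact this
  rw [← hcard, ← Finset.card_univ]
  apply Finset.card_le_card_of_injOn (fun x => fun i : {i : Fin n // i ∉ S} => x i.1)
    (fun _ _ => Finset.mem_univ _)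
  intro x hx y hy hxy
  simp only [Finset.coe_filter, Set.mem_setOf_eq, Finset.mem_univ, true_and] at hx hy
  funext i
  by_cases hi : i ∈ S
  · rw [hx i hi, hy i hi]
  · exact congrFun hxy ⟨i, hi⟩

lemma frobSq_cz_sub_one {n ℓ : ℕ} (S : Finset (Fin n)) (hS : ℓ ≤ S.card) :
    frobSq (czGate S - 1) ≤ 4 * ((2:ℝ) ^ n / 2 ^ ℓ) := by
  have hℓn : ℓ ≤ n := le_trans hS (by simpa using Finset.card_le_univ S)
  have hentry : ∀ x y : Fin n → Bool, (czGate S - 1) x y =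
      if x = y ∧ (∀ i ∈ S, x i = true) then -2 else 0 := by
    intro x y
    simp only [Matrix.sub_apply, czGate, Matrix.of_apply, Matrix.one_apply]
    by_cases h : x = y
    · subst h; simp only [if_pos rfl, if_pos (And.intro rfl)]
      split_ifs with h1 h2 h2 <;> simp_all <;> ring
    · simp [h]
  have hsum : frobSq (czGate S - 1)
      = ((Finset.univ.filter fun x : Fin n → Bool => ∀ i ∈ S, x i = true).card : ℝ) * 4 := by
    unfold frobSq
    rw [← Finset.sum_filter_add_sum_filter_not Finset.univ
      (fun x : Fin n → Bool => ∀ i ∈ S, x i = true)]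
    have h1 : ∀ x ∈ Finset.univ.filter fun x : Fin n → Bool => ∀ i ∈ S, x i = true,
        (∑ y, ‖(czGate S - 1) x y‖ ^ 2) = 4 := by
      intro x hx
      simp only [Finset.mem_filter] at hx
      rw [Finset.sum_eq_single x]
      · rw [hentry x x, if_pos ⟨rfl, hx.2⟩]; simp; norm_num
      · intro y _ hyx
        rw [hentry x y, if_neg (by tauto)]
        simp
      · simp
    have h2 : ∀ x ∈ Finset.univ.filter fun x : Fin n → Bool => ¬ ∀ i ∈ S, x i = true,
        (∑ y, ‖(czGate S - 1) x y‖ ^ 2) = 0 := by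
      intro x hx
      simp only [Finset.mem_filter] at hx
      apply Finset.sum_eq_zero
      intro y _
      rw [hentry x y, if_neg (by tauto)]
      simp
    rw [Finset.sum_congr rfl h1, Finset.sum_congr rfl h2]
    simp [Finset.sum_const, nsmul_eq_mul, mul_comm]
  rw [hsum]
  have hcard := card_allTrue S
  have hc2 : ((Finset.univ.filter fun x : Fin n → Bool => ∀ i ∈ S, x i = true).card : ℝ)
      ≤ (2:ℝ) ^ n / 2 ^ ℓ := by
    have h3 : (2:ℕ) ^ (n - S.card) ≤ 2 ^ (n - ℓ) :=
      Nat.pow_le_pow_right (by norm_num) (Nat.sub_le_sub_left hS n)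
    have h4 : ((2:ℝ) ^ (n - ℓ)) = (2:ℝ) ^ n / 2 ^ ℓ := by
      rw [eq_div_iff (by positivity), ← pow_add, Nat.sub_add_cancel hℓn]
    calc ((Finset.univ.filter fun x : Fin n → Bool => ∀ i ∈ S, x i = true).card : ℝ)
        ≤ ((2:ℕ) ^ (n - S.card) : ℝ) := by exact_mod_cast hcard
      _ ≤ ((2:ℕ) ^ (n - ℓ) : ℝ) := by exact_mod_cast h3
      _ = (2:ℝ) ^ n / 2 ^ ℓ := by push_cast; exact h4
  linarith

lemma norm_cz_sub_one {n ℓ : ℕ} (S : Finset (Fin n)) (hS : ℓ ≤ S.card) :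
    ‖czGate S - 1‖ ≤ 2 * Real.sqrt ((2:ℝ) ^ n / 2 ^ ℓ) := by
  have h := frobSq_cz_sub_one S hS
  rw [frobSq_eq] at h
  have h2 : (0:ℝ) ≤ (2:ℝ) ^ n / 2 ^ ℓ := by positivity
  rw [← Real.sqrt_sq (norm_nonneg (czGate S - 1))]
  calc Real.sqrt (‖czGate S - 1‖ ^ 2) ≤ Real.sqrt (4 * ((2:ℝ) ^ n / 2 ^ ℓ)) :=
        Real.sqrt_le_sqrt h
    _ = 2 * Real.sqrt ((2:ℝ) ^ n / 2 ^ ℓ) := by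
        rw [show (4:ℝ) = 2 ^ 2 by norm_num, Real.sqrt_mul (by positivity),
          Real.sqrt_sq (by norm_num)]

lemma telescope (n ℓ : ℕ) : ∀ (m : ℕ)
    (V : Fin (m + 1) → Matrix (Fin n → Bool) (Fin n → Bool) ℂ),
    (∀ i, IsUnitaryM (V i)) →
    ∀ (S : Fin m → Finset (Fin n)), (∀ j, ℓ ≤ (S j).card) →
    ‖(V 0 * (List.ofFn fun j : Fin m => czGate (S j) * V j.succ).prod) -
        (V 0 * (List.ofFn fun j : Fin m => V j.succ).prod)‖
      ≤ m * (2 * Real.sqrt ((2:ℝ) ^ n / 2 ^ ℓ))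
  | 0, V, hV, S, hS => by simp
  | (m + 1), V, hV, S, hS => by
      have IH := telescope n ℓ m (fun i => V i.succ) (fun i => hV i.succ)
        (fun j => S j.succ) (fun j => hS j.succ)
      set B := 2 * Real.sqrt ((2:ℝ) ^ n / 2 ^ ℓ) with hB
      set R := (List.ofFn fun j : Fin m => czGate (S j.succ) * V j.succ.succ).prod with hR
      set T := (List.ofFn fun j : Fin m => V j.succ.succ).prod with hT
      have hTun : IsUnitaryM T := by
        apply isUnitary_listProd
        intro A hA
        rw [List.mem_ofFn] at hA
        obtain ⟨j, rfl⟩ := hA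
        exact hV _
      rw [List.ofFn_succ, List.ofFn_succ (f := fun j : Fin (m + 1) => V j.succ),
        List.prod_cons, List.prod_cons]
      rw [← hR, ← hT]
      have key : V 0 * (czGate (S 0) * V (Fin.succ 0) * R) - V 0 * (V (Fin.succ 0) * T)
          = (V 0 * czGate (S 0)) * (V (Fin.succ 0) * R - V (Fin.succ 0) * T)
            + (V 0 * (czGate (S 0) - 1)) * (V (Fin.succ 0) * T) := by
        noncomm_ring
      rw [key]
      have h1 : ‖(V 0 * czGate (S 0)) * (V (Fin.succ 0) * R - V (Fin.succ 0) * T)‖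
          ≤ m * B := by
        rw [norm_unit_left _ (isUnitary_mul (hV 0) (isUnitary_czGate (S 0)))]
        exact IH
      have h2 : ‖(V 0 * (czGate (S 0) - 1)) * (V (Fin.succ 0) * T)‖ ≤ B := by
        rw [norm_unit_right _ (isUnitary_mul (hV (Fin.succ 0)) hTun),
          norm_unit_left _ (hV 0)]
        exact norm_cz_sub_one (S 0) (hS 0)
      calc ‖_ + _‖ ≤ ‖(V 0 * czGate (S 0)) * (V (Fin.succ 0) * R - V (Fin.succ 0) * T)‖
            + ‖(V 0 * (czGate (S 0) - 1)) * (V (Fin.succ 0) * T)‖ := norm_add_le _ _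
        _ ≤ m * B + B := add_le_add h1 h2
        _ = (m + 1 : ℕ) * B := by push_cast; ring


end Aux

/-- Removing the wide CZ gates changes the unitary by at most
`4·m²·2^{-ℓ}` in normalized squared Frobenius norm. -/
theorem removing_wide_cz_unitary (n ℓ m : ℕ) (hℓ : 1 ≤ ℓ)
    (V : Fin (m + 1) → Matrix (Fin n → Bool) (Fin n → Bool) ℂ)
    (hV : ∀ i, IsUnitaryM (V i))
    (S : Fin m → Finset (Fin n))
    (hSne : ∀ j, (S j).Nonempty) (hScard : ∀ j, ℓ ≤ (S j).card) :
    ((2 : ℝ) ^ n)⁻¹ *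
        frobSq ((V 0 * (List.ofFn fun j : Fin m => czGate (S j) * V j.succ).prod) -
          (V 0 * (List.ofFn fun j : Fin m => V j.succ).prod)) ≤
      4 * (m : ℝ) ^ 2 / 2 ^ ℓ := by
  have h := telescope n ℓ m V hV S hScard
  set D := (V 0 * (List.ofFn fun j : Fin m => czGate (S j) * V j.succ).prod) -
    (V 0 * (List.ofFn fun j : Fin m => V j.succ).prod) with hD
  have hx : (0:ℝ) ≤ (2:ℝ) ^ n / 2 ^ ℓ := by positivity
  have hB2 : (2 * Real.sqrt ((2:ℝ) ^ n / 2 ^ ℓ)) ^ 2 = 4 * ((2:ℝ) ^ n / 2 ^ ℓ) := by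
    rw [mul_pow, Real.sq_sqrt hx]; ring
  have h2 : frobSq D ≤ (m:ℝ) ^ 2 * (4 * ((2:ℝ) ^ n / 2 ^ ℓ)) := by
    rw [frobSq_eq]
    calc ‖D‖ ^ 2 ≤ ((m:ℝ) * (2 * Real.sqrt ((2:ℝ) ^ n / 2 ^ ℓ))) ^ 2 :=
          pow_le_pow_left₀ (norm_nonneg D) h 2
      _ = (m:ℝ) ^ 2 * (4 * ((2:ℝ) ^ n / 2 ^ ℓ)) := by rw [mul_pow, hB2]
  have hpos : (0:ℝ) < (2:ℝ) ^ n := by positivity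
  calc ((2:ℝ) ^ n)⁻¹ * frobSq D
      ≤ ((2:ℝ) ^ n)⁻¹ * ((m:ℝ) ^ 2 * (4 * ((2:ℝ) ^ n / 2 ^ ℓ))) := by
        apply mul_le_mul_of_nonneg_left h2 (by positivity)
    _ = 4 * (m : ℝ) ^ 2 / 2 ^ ℓ := by field_simp
end
end

section
/- For any two n-qubit unitaries U and Ũ, the Choi representations of the corresponding last-qubit-output channels satisfy ‖Φ_U − Φ_{Ũ}‖_F ≤ 4√2 · ‖U − Ũ‖_F. -/
open scoped BigOperators ComplexOrder

noncomputable section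

private lemma normSq_add_le' (a b : ℂ) :
    Complex.normSq (a + b) ≤ 2 * Complex.normSq a + 2 * Complex.normSq b := by
  have ha := norm_nonneg a
  have hb := norm_nonneg b
  have h := norm_add_le a b
  have h1 : Complex.normSq (a + b) = ‖a + b‖ ^ 2 := (Complex.sq_norm _).symm
  have h2 : Complex.normSq a = ‖a‖ ^ 2 := (Complex.sq_norm _).symm
  have h3 : Complex.normSq b = ‖b‖ ^ 2 := (Complex.sq_norm _).symm
  rw [h1, h2, h3]
  nlinarith [norm_nonneg (a + b), sq_nonneg (‖a‖ - ‖b‖)]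

private lemma snoc_eq_iff' {m : ℕ} (z z' : Fin m → Bool) (b : Bool) :
    (Fin.snoc z b : Fin (m+1) → Bool) = Fin.snoc z' b ↔ z = z' := by
  constructor
  · intro h
    funext i
    have := congrFun h i.castSucc
    simpa using this
  · rintro rfl; rfl

/-- The snoc equivalence. -/
private def snocE (m : ℕ) : ((Fin m → Bool) × Bool) ≃ (Fin (m+1) → Bool) where
  toFun p := Fin.snoc p.1 p.2
  invFun w := (Fin.init w, w (Fin.last m))
  left_inv := by rintro ⟨z, b⟩; simp [Fin.init_snoc]
  right_inv := fun w => Fin.snoc_init_self w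

private lemma sum_snoc' {m : ℕ} (f : (Fin (m+1) → Bool) → ℝ) :
    ∑ w : Fin (m+1) → Bool, f w
      = ∑ x : Fin m → Bool, ∑ b : Bool, f (Fin.snoc x b) := by
  have h := Fintype.sum_equiv (snocE m)
    (fun p : (Fin m → Bool) × Bool => f (Fin.snoc p.1 p.2)) f (fun p => rfl)
  rw [← h, Fintype.sum_prod_type]

private lemma sum_normSq_row {m : ℕ}
    (W : Matrix (Fin (m+1) → Bool) (Fin (m+1) → Bool) ℂ)
    (hW : W * W.conjTranspose = 1) (b : Bool)
    (A : (Fin m → Bool) → ℂ) :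
    ∑ x : Fin (m+1) → Bool,
      Complex.normSq (∑ z : Fin m → Bool, A z * W (Fin.snoc z b) x)
      = ∑ z : Fin m → Bool, Complex.normSq (A z) := by
  have key : ∀ r s, (∑ x, W r x * (starRingEnd ℂ) (W s x)) = if r = s then 1 else 0 := by
    intro r s
    have h := congrFun (congrFun hW r) s
    simpa [Matrix.mul_apply, Matrix.conjTranspose_apply, Matrix.one_apply] using h
  have hC : ∑ x : Fin (m+1) → Bool,
      ((∑ z : Fin m → Bool, A z * W (Fin.snoc z b) x) *
        (starRingEnd ℂ) (∑ z : Fin m → Bool, A z * W (Fin.snoc z b) x))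
      = ∑ z : Fin m → Bool, (A z * (starRingEnd ℂ) (A z)) := by
    have step : ∀ x : Fin (m+1) → Bool,
        (∑ z : Fin m → Bool, A z * W (Fin.snoc z b) x) *
          (starRingEnd ℂ) (∑ z : Fin m → Bool, A z * W (Fin.snoc z b) x)
        = ∑ z : Fin m → Bool, ∑ z' : Fin m → Bool,
            (A z * (starRingEnd ℂ) (A z')) *
              (W (Fin.snoc z b) x * (starRingEnd ℂ) (W (Fin.snoc z' b) x)) := by
      intro x
      rw [map_sum, Finset.sum_mul_sum]
      refine Finset.sum_congr rfl fun z _ => Finset.sum_congr rfl fun z' _ => ?_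
      rw [map_mul]; ring
    simp only [step]
    rw [Finset.sum_comm]
    refine Finset.sum_congr rfl fun z _ => ?_
    rw [Finset.sum_comm]
    have inner : ∀ z' : Fin m → Bool,
        (∑ x : Fin (m+1) → Bool,
          (A z * (starRingEnd ℂ) (A z')) *
            (W (Fin.snoc z b) x * (starRingEnd ℂ) (W (Fin.snoc z' b) x)))
        = (A z * (starRingEnd ℂ) (A z')) * (if z = z' then 1 else 0) := by
      intro z'
      rw [← Finset.mul_sum, key]
      congr 1
      simp [snoc_eq_iff']
    simp only [inner]
    simp
  have hC2 : ((∑ x : Fin (m+1) → Bool,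
      Complex.normSq (∑ z : Fin m → Bool, A z * W (Fin.snoc z b) x) : ℝ) : ℂ)
      = ((∑ z : Fin m → Bool, Complex.normSq (A z) : ℝ) : ℂ) := by
    push_cast
    simpa only [Complex.mul_conj] using hC
  exact_mod_cast hC2

private lemma choiU_apply {m : ℕ} (U : Matrix (Fin (m+1) → Bool) (Fin (m+1) → Bool) ℂ)
    (w w' : Fin (m+1+1) → Bool) :
    choiU U w w' = ∑ z : Fin m → Bool,
      U (Fin.snoc z (w (Fin.last (m+1)))) (fun i => w i.castSucc) *
        (starRingEnd ℂ) (U (Fin.snoc z (w' (Fin.last (m+1)))) (fun i => w' i.castSucc)) := by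
  simp only [choiU, choiOfChannel, chanU, chanLast, Matrix.of_apply]
  refine Finset.sum_congr rfl fun z _ => ?_
  simp [Matrix.mul_apply, Matrix.conjTranspose_apply, Matrix.single,
    Finset.mul_sum, Finset.sum_mul, ite_and]


private lemma sum3_comm {α β γ : Type*} [Fintype α] [Fintype β] [Fintype γ]
    (f : α → β → γ → ℝ) :
    ∑ a, ∑ b, ∑ c, f a b c = ∑ c, ∑ b, ∑ a, f a b c := by
  have h : ∀ a, ∑ b, ∑ c, f a b c = ∑ c, ∑ b, f a b c := fun a => Finset.sum_comm
  simp only [h]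
  rw [Finset.sum_comm]
  exact Finset.sum_congr rfl fun c _ => Finset.sum_comm

private lemma sum4_reorder {α β γ δ : Type*} [Fintype α] [Fintype β] [Fintype γ] [Fintype δ]
    (f : α → β → γ → δ → ℝ) :
    ∑ a, ∑ b, ∑ c, ∑ d, f a b c d = ∑ b, ∑ c, ∑ d, ∑ a, f a b c d := by
  rw [Finset.sum_comm]
  refine Finset.sum_congr rfl fun b _ => ?_
  rw [Finset.sum_comm]
  refine Finset.sum_congr rfl fun c _ => Finset.sum_comm

/-- The Choi representations of the last-qubit-output channels of two
unitaries are `4√2`-Lipschitz in Frobenius norm. -/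
theorem choi_distance_le_unitary_distance (n : ℕ)
    (U V : Matrix (Fin n → Bool) (Fin n → Bool) ℂ)
    (hU : IsUnitaryM U) (hV : IsUnitaryM V) :
    Real.sqrt (frobSq (choiU U - choiU V)) ≤
      4 * Real.sqrt 2 * Real.sqrt (frobSq (U - V)) := by
  cases n with
  | zero =>
    have h0 : choiU U - choiU V = 0 := by
      funext w w'
      simp [choiU, choiOfChannel, chanU, chanLast]
    have hz : frobSq (choiU U - choiU V) = 0 := by
      rw [h0]; simp [frobSq]
    rw [hz, Real.sqrt_zero]
    positivity
  | succ m =>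
    have hUU := hU.1
    have hVV := hV.1
    set D := U - V with hD
    have hentry : ∀ (x x' : Fin (m+1) → Bool) (b b' : Bool),
        (choiU U - choiU V) (Fin.snoc x b) (Fin.snoc x' b')
        = (∑ z : Fin m → Bool,
            D (Fin.snoc z b) x * (starRingEnd ℂ) (U (Fin.snoc z b') x'))
          + (∑ z : Fin m → Bool,
            V (Fin.snoc z b) x * (starRingEnd ℂ) (D (Fin.snoc z b') x')) := by
      intro x x' b b'
      have e1 : (fun i : Fin (m+1) =>
          (Fin.snoc x b : Fin (m+1+1) → Bool) i.castSucc) = x := by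
        funext i; simp
      have e2 : (fun i : Fin (m+1) =>
          (Fin.snoc x' b' : Fin (m+1+1) → Bool) i.castSucc) = x' := by
        funext i; simp
      rw [Matrix.sub_apply, choiU_apply U, choiU_apply V]
      simp only [Fin.snoc_last, e1, e2]
      rw [← Finset.sum_sub_distrib, ← Finset.sum_add_distrib]
      refine Finset.sum_congr rfl fun z _ => ?_
      simp only [hD, Matrix.sub_apply, map_sub]
      ring
    have key1 : ∀ (x : Fin (m+1) → Bool) (b b' : Bool),
        (∑ x' : Fin (m+1) → Bool, Complex.normSq (∑ z : Fin m → Bool,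
          D (Fin.snoc z b) x * (starRingEnd ℂ) (U (Fin.snoc z b') x')))
        = ∑ z : Fin m → Bool, Complex.normSq (D (Fin.snoc z b) x) := by
      intro x b b'
      have h := sum_normSq_row U hUU b'
        (fun z => (starRingEnd ℂ) (D (Fin.snoc z b) x))
      have hc : ∀ x' : Fin (m+1) → Bool,
          (∑ z : Fin m → Bool,
            D (Fin.snoc z b) x * (starRingEnd ℂ) (U (Fin.snoc z b') x'))
          = (starRingEnd ℂ) (∑ z : Fin m → Bool,
              (starRingEnd ℂ) (D (Fin.snoc z b) x) * U (Fin.snoc z b') x') := by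
        intro x'
        rw [map_sum]
        refine Finset.sum_congr rfl fun z _ => ?_
        rw [map_mul, Complex.conj_conj]
      simp only [hc, Complex.normSq_conj]
      simpa [Complex.normSq_conj] using h
    have key2 : ∀ (x' : Fin (m+1) → Bool) (b b' : Bool),
        (∑ x : Fin (m+1) → Bool, Complex.normSq (∑ z : Fin m → Bool,
          V (Fin.snoc z b) x * (starRingEnd ℂ) (D (Fin.snoc z b') x')))
        = ∑ z : Fin m → Bool, Complex.normSq (D (Fin.snoc z b') x') := by
      intro x' b b'
      have h := sum_normSq_row V hVV b
        (fun z => (starRingEnd ℂ) (D (Fin.snoc z b') x'))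
      have hc : ∀ x : Fin (m+1) → Bool,
          (∑ z : Fin m → Bool,
            V (Fin.snoc z b) x * (starRingEnd ℂ) (D (Fin.snoc z b') x'))
          = ∑ z : Fin m → Bool,
            (starRingEnd ℂ) (D (Fin.snoc z b') x') * V (Fin.snoc z b) x := by
        intro x
        exact Finset.sum_congr rfl fun z _ => mul_comm _ _
      simp only [hc]
      simpa [Complex.normSq_conj] using h
    have frob_eq : frobSq (choiU U - choiU V)
        = ∑ x : Fin (m+1) → Bool, ∑ b : Bool, ∑ x' : Fin (m+1) → Bool, ∑ b' : Bool,
            Complex.normSq ((choiU U - choiU V) (Fin.snoc x b) (Fin.snoc x' b')) := by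
      simp only [frobSq, Complex.sq_norm]
      rw [sum_snoc' (m := m+1)]
      refine Finset.sum_congr rfl fun x _ => Finset.sum_congr rfl fun b _ => ?_
      rw [sum_snoc' (m := m+1)]
    have frobD : frobSq D
        = ∑ z : Fin m → Bool, ∑ b : Bool, ∑ y : Fin (m+1) → Bool,
            Complex.normSq (D (Fin.snoc z b) y) := by
      simp only [frobSq, Complex.sq_norm]
      rw [sum_snoc' (m := m)]
    have main : frobSq (choiU U - choiU V) ≤ 8 * frobSq D := by
      rw [frob_eq]
      have step1 :
          (∑ x : Fin (m+1) → Bool, ∑ b : Bool, ∑ x' : Fin (m+1) → Bool, ∑ b' : Bool,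
            Complex.normSq ((choiU U - choiU V) (Fin.snoc x b) (Fin.snoc x' b')))
          ≤ ∑ x : Fin (m+1) → Bool, ∑ b : Bool, ∑ x' : Fin (m+1) → Bool, ∑ b' : Bool,
              (2 * Complex.normSq (∑ z : Fin m → Bool,
                  D (Fin.snoc z b) x * (starRingEnd ℂ) (U (Fin.snoc z b') x'))
               + 2 * Complex.normSq (∑ z : Fin m → Bool,
                  V (Fin.snoc z b) x * (starRingEnd ℂ) (D (Fin.snoc z b') x'))) := by
        refine Finset.sum_le_sum fun x _ => Finset.sum_le_sum fun b _ =>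
          Finset.sum_le_sum fun x' _ => Finset.sum_le_sum fun b' _ => ?_
        rw [hentry]
        exact normSq_add_le' _ _
      refine step1.trans ?_
      have split :
          (∑ x : Fin (m+1) → Bool, ∑ b : Bool, ∑ x' : Fin (m+1) → Bool, ∑ b' : Bool,
              (2 * Complex.normSq (∑ z : Fin m → Bool,
                  D (Fin.snoc z b) x * (starRingEnd ℂ) (U (Fin.snoc z b') x'))
               + 2 * Complex.normSq (∑ z : Fin m → Bool,
                  V (Fin.snoc z b) x * (starRingEnd ℂ) (D (Fin.snoc z b') x'))))
          = (∑ x : Fin (m+1) → Bool, ∑ b : Bool, ∑ x' : Fin (m+1) → Bool, ∑ b' : Bool,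
              2 * Complex.normSq (∑ z : Fin m → Bool,
                  D (Fin.snoc z b) x * (starRingEnd ℂ) (U (Fin.snoc z b') x')))
            + (∑ x : Fin (m+1) → Bool, ∑ b : Bool, ∑ x' : Fin (m+1) → Bool, ∑ b' : Bool,
              2 * Complex.normSq (∑ z : Fin m → Bool,
                  V (Fin.snoc z b) x * (starRingEnd ℂ) (D (Fin.snoc z b') x'))) := by
        simp [Finset.sum_add_distrib]
      rw [split]
      have hA :
          (∑ x : Fin (m+1) → Bool, ∑ b : Bool, ∑ x' : Fin (m+1) → Bool, ∑ b' : Bool,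
              2 * Complex.normSq (∑ z : Fin m → Bool,
                  D (Fin.snoc z b) x * (starRingEnd ℂ) (U (Fin.snoc z b') x')))
          = 4 * frobSq D := by
        have inner : ∀ (x : Fin (m+1) → Bool) (b : Bool),
            (∑ x' : Fin (m+1) → Bool, ∑ b' : Bool,
              2 * Complex.normSq (∑ z : Fin m → Bool,
                  D (Fin.snoc z b) x * (starRingEnd ℂ) (U (Fin.snoc z b') x')))
            = 4 * ∑ z : Fin m → Bool, Complex.normSq (D (Fin.snoc z b) x) := by
          intro x b
          rw [Finset.sum_comm]
          have : ∀ b' : Bool,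
              (∑ x' : Fin (m+1) → Bool,
                2 * Complex.normSq (∑ z : Fin m → Bool,
                  D (Fin.snoc z b) x * (starRingEnd ℂ) (U (Fin.snoc z b') x')))
              = 2 * ∑ z : Fin m → Bool, Complex.normSq (D (Fin.snoc z b) x) := by
            intro b'
            rw [← Finset.mul_sum, key1 x b b']
          rw [Fintype.sum_bool, this, this]
          ring
        simp only [inner]
        rw [frobD]
        simp only [Finset.mul_sum]
        exact sum3_comm (fun x b z => 4 * Complex.normSq (D (Fin.snoc z b) x))
      have hB :
          (∑ x : Fin (m+1) → Bool, ∑ b : Bool, ∑ x' : Fin (m+1) → Bool, ∑ b' : Bool,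
              2 * Complex.normSq (∑ z : Fin m → Bool,
                  V (Fin.snoc z b) x * (starRingEnd ℂ) (D (Fin.snoc z b') x')))
          = 4 * frobSq D := by
        rw [sum4_reorder (fun x b x' b' =>
          2 * Complex.normSq (∑ z : Fin m → Bool,
            V (Fin.snoc z b) x * (starRingEnd ℂ) (D (Fin.snoc z b') x')))]
        have inner : ∀ (b : Bool) (x' : Fin (m+1) → Bool) (b' : Bool),
            (∑ x : Fin (m+1) → Bool,
              2 * Complex.normSq (∑ z : Fin m → Bool,
                V (Fin.snoc z b) x * (starRingEnd ℂ) (D (Fin.snoc z b') x')))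
            = 2 * ∑ z : Fin m → Bool, Complex.normSq (D (Fin.snoc z b') x') := by
          intro b x' b'
          rw [← Finset.mul_sum, key2 x' b b']
        simp only [inner]
        rw [Fintype.sum_bool]
        have hS : (∑ x' : Fin (m+1) → Bool, ∑ b' : Bool,
            2 * ∑ z : Fin m → Bool, Complex.normSq (D (Fin.snoc z b') x'))
            = 2 * frobSq D := by
          rw [frobD]
          simp only [Finset.mul_sum]
          exact sum3_comm (fun x' b' z => 2 * Complex.normSq (D (Fin.snoc z b') x'))
        rw [hS]
        ring
      rw [hA, hB]
      linarith [Real.sqrt_nonneg (0:ℝ)]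
    have hsq := Real.sqrt_le_sqrt main
    refine hsq.trans ?_
    rw [Real.sqrt_mul (by norm_num : (0:ℝ) ≤ 8)]
    have h82 : Real.sqrt 8 ≤ 4 * Real.sqrt 2 := by
      have : (4:ℝ) * Real.sqrt 2 = Real.sqrt 32 := by
        rw [show (32:ℝ) = 4 ^ 2 * 2 by norm_num,
          Real.sqrt_mul (by positivity), Real.sqrt_sq (by norm_num : (0:ℝ) ≤ 4)]
      rw [this]
      exact Real.sqrt_le_sqrt (by norm_num)
    exact mul_le_mul_of_nonneg_right h82 (Real.sqrt_nonneg _)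
end
end
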